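/- arXiv:0903.3117 — 3 statements merged into one kernel-verified Lean document; each statement's English description precedes it below -/
import Mathlib

section
/- Assume the Ornstein-Uhlenbeck hypotheses: Q, B : ℝ → ℝ^{N×N} with entries q_{ij} ∈ C_b^1(ℝ), b_{ij} ∈ C_b(ℝ), Q(s) symmetric with ⟨Q(s)ξ, ξ⟩ ≥ η₀|ξ|² for some η₀ > 0 and all ξ ∈ ℝ^N, s ∈ ℝ; and the evolution matrices U(s,r) (solving D_s U(s,r) = B(s)U(s,r), U(r,r) = I) satisfy ‖U(r,s)‖ ≤ C₀ e^{-ω(s-r)} for all s ≥ r and some constants C₀, ω > 0. Define Q_s = ∫_s^{+∞} U(s,ξ) Q(ξ) U(s,ξ)* dξ. Then there exist constants C₁, C₂ > 0 such that for all r ∈ ℝ and x ∈ ℝ^N: C₁|x|² ≤ ⟨Q_r x, x⟩ ≤ C₂|x|², C₂^{-1}|x| ≤ |Q_r^{-1} x| ≤ C₁^{-1}|x|, and C₁^N ≤ det Q_r ≤ C₂^N. -/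
noncomputable section
open MeasureTheory Real Set Filter ENNReal NNReal Matrix

def enorm2 {N : ℕ} (x : Fin N → ℝ) : ℝ := Real.sqrt (∑ i, x i ^ 2)

def opNorm {N : ℕ} (A : Matrix (Fin N) (Fin N) ℝ) : ℝ :=
  ‖Matrix.toEuclideanCLM (𝕜 := ℝ) A‖

/-!
Writing `y = U(r,ξ)ᵀ x`, the quadratic form is `⟨Q_r x, x⟩ = ∫_r^∞ ⟨Q(ξ) y, y⟩ dξ`. The decay of
`U(r,ξ)` bounds the integrand above by `C e^{-2ω(ξ-r)} |x|²`. For the lower bound, uniqueness for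
the linear ODE gives `U(r,ξ) U(ξ,r) = I`, so `x = U(ξ,r)ᵀ y`, and Grönwall's inequality gives
`‖U(ξ,r)‖ ≤ e^{K(ξ-r)}` with `K = sup ‖B‖`; hence the integrand is at least
`η₀ e^{-2K(ξ-r)} |x|²`. The two-sided bound `C₁ ≤ Q_r ≤ C₂` for the symmetric matrix `Q_r` puts
its eigenvalues in `[C₁, C₂]`, which bounds `det Q_r` and `Q_r⁻¹`.
-/

-- Matrices carry the operator norm for the Euclidean norm, so that `opNorm A = ‖A‖`.
open scoped Matrix.Norms.L2Operator

section EuclideanNorm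

variable {N : ℕ}

lemma enorm2_nonneg (x : Fin N → ℝ) : 0 ≤ enorm2 x := sqrt_nonneg _

lemma enorm2_eq_norm (x : Fin N → ℝ) : enorm2 x = ‖WithLp.toLp 2 x‖ := by
  simp [enorm2, EuclideanSpace.norm_eq]

lemma dotProduct_le_enorm2_mul (u v : Fin N → ℝ) : u ⬝ᵥ v ≤ enorm2 u * enorm2 v := by
  rw [enorm2_eq_norm, enorm2_eq_norm, ← dotProduct_comm]
  have := real_inner_le_norm (WithLp.toLp 2 u) (WithLp.toLp 2 v)
  simpa [EuclideanSpace.inner_eq_star_dotProduct] using this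

lemma enorm2_mulVec_le (A : Matrix (Fin N) (Fin N) ℝ) (x : Fin N → ℝ) :
    enorm2 (A *ᵥ x) ≤ ‖A‖ * enorm2 x := by
  simpa [enorm2_eq_norm] using A.l2_opNorm_mulVec (WithLp.toLp 2 x)

lemma dotProduct_mulVec_le (A : Matrix (Fin N) (Fin N) ℝ) (x : Fin N → ℝ) :
    (A *ᵥ x) ⬝ᵥ x ≤ ‖A‖ * enorm2 x ^ 2 :=
  calc (A *ᵥ x) ⬝ᵥ x ≤ enorm2 (A *ᵥ x) * enorm2 x := dotProduct_le_enorm2_mul _ _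
    _ ≤ ‖A‖ * enorm2 x * enorm2 x :=
      mul_le_mul_of_nonneg_right (enorm2_mulVec_le A x) (enorm2_nonneg x)
    _ = ‖A‖ * enorm2 x ^ 2 := by ring

end EuclideanNorm

lemma Matrix.dotProduct_mul_mul_transpose_mulVec {n : Type*} [Fintype n] (A Q : Matrix n n ℝ)
    (x : n → ℝ) :
    ((A * Q * Aᵀ) *ᵥ x) ⬝ᵥ x = (Q *ᵥ (Aᵀ *ᵥ x)) ⬝ᵥ (Aᵀ *ᵥ x) := by
  rw [← mulVec_mulVec, ← mulVec_mulVec, dotProduct_comm, dotProduct_mulVec, ← mulVec_transpose,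
    dotProduct_comm]

section L2OpNorm

variable {n : Type*} [Fintype n] [DecidableEq n]

def Matrix.ofL2OpCLE : (n → n → ℝ) ≃L[ℝ] Matrix n n ℝ :=
  (Matrix.ofLinearEquiv ℝ).toContinuousLinearEquiv

lemma Matrix.exists_l2_opNorm_le_of_abs_le {ι : Type*} {A : ι → Matrix n n ℝ}
    (h : ∃ C, ∀ s i j, |A s i j| ≤ C) : ∃ K, 0 < K ∧ ∀ s, ‖A s‖ ≤ K := by
  obtain ⟨C, hC⟩ := h
  set e : (n → n → ℝ) →L[ℝ] Matrix n n ℝ := ofL2OpCLE.toContinuousLinearMap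
  refine ⟨‖e‖ * max C 0 + 1, by positivity, fun s => ?_⟩
  have hpi : ‖(Matrix.of.symm (A s) : n → n → ℝ)‖ ≤ max C 0 :=
    pi_norm_le_iff_of_nonneg (le_max_right _ _) |>.2 fun i =>
      pi_norm_le_iff_of_nonneg (le_max_right _ _) |>.2 fun j => (hC s i j).trans (le_max_left _ _)
  calc ‖A s‖ = ‖e (Matrix.of.symm (A s))‖ := rfl
    _ ≤ _ := (ContinuousLinearMap.le_opNorm _ _).trans (by gcongr)
    _ ≤ _ := le_add_of_nonneg_right zero_le_one

lemma Matrix.hasDerivAt_of_hasDerivAt_entries {f : ℝ → Matrix n n ℝ} {f' : Matrix n n ℝ}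
    {t : ℝ} (h : ∀ i j, HasDerivAt (fun s => f s i j) (f' i j) t) : HasDerivAt f f' t := by
  have hpi : HasDerivAt (fun s => (Matrix.of.symm (f s) : n → n → ℝ)) (Matrix.of.symm f') t :=
    hasDerivAt_pi.2 fun i => hasDerivAt_pi.2 fun j => h i j
  exact (ofL2OpCLE (n := n)).hasFDerivAt.comp_hasDerivAt t hpi

lemma Matrix.l2_opNorm_one_le : ‖(1 : Matrix n n ℝ)‖ ≤ 1 := by
  rw [← diagonal_one, l2_opNorm_diagonal]
  exact (pi_norm_le_iff_of_nonneg zero_le_one).2 fun _ => by simp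

lemma Matrix.l2_opNorm_transpose (A : Matrix n n ℝ) : ‖Aᵀ‖ = ‖A‖ := by
  simpa using l2_opNorm_conjTranspose A

lemma Matrix.l2_opNorm_mul_mul_transpose_le (A Q : Matrix n n ℝ) :
    ‖A * Q * Aᵀ‖ ≤ ‖A‖ ^ 2 * ‖Q‖ :=
  calc ‖A * Q * Aᵀ‖ ≤ ‖A‖ * ‖Q‖ * ‖Aᵀ‖ := norm_mul₃_le
    _ = ‖A‖ ^ 2 * ‖Q‖ := by rw [l2_opNorm_transpose]; ring

lemma l2_opNorm_mul_mul_transpose_le_exp {A M : Matrix n n ℝ} {C₀ ω t q : ℝ}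
    (hA : ‖A‖ ≤ C₀ * exp (-ω * t)) (hM : ‖M‖ ≤ q) :
    ‖A * M * Aᵀ‖ ≤ C₀ ^ 2 * q * exp (-(2 * ω) * t) :=
  calc ‖A * M * Aᵀ‖ ≤ ‖A‖ ^ 2 * ‖M‖ := Matrix.l2_opNorm_mul_mul_transpose_le A M
    _ ≤ (C₀ * exp (-ω * t)) ^ 2 * q := by gcongr
    _ = C₀ ^ 2 * q * exp (-(2 * ω) * t) := by rw [mul_pow, sq (exp _), ← exp_add]; ring_nf

end L2OpNorm

section QuadraticFormBounds

variable {N : ℕ} {M : Matrix (Fin N) (Fin N) ℝ} {c c₁ c₂ : ℝ}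

lemma mul_enorm2_le_enorm2_mulVec (hlow : ∀ x, c * enorm2 x ^ 2 ≤ (M *ᵥ x) ⬝ᵥ x)
    (y : Fin N → ℝ) : c * enorm2 y ≤ enorm2 (M *ᵥ y) := by
  rcases (enorm2_nonneg y).eq_or_lt with hy | hy
  · rw [← hy, mul_zero]; exact enorm2_nonneg _
  refine le_of_mul_le_mul_right ?_ hy
  calc c * enorm2 y * enorm2 y = c * enorm2 y ^ 2 := by ring
    _ ≤ (M *ᵥ y) ⬝ᵥ y := hlow y
    _ ≤ enorm2 (M *ᵥ y) * enorm2 y := dotProduct_le_enorm2_mul _ _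

lemma l2_opNorm_le_of_dotProduct_mulVec_le (hM : M.IsHermitian)
    (hpos : ∀ x, 0 ≤ (M *ᵥ x) ⬝ᵥ x) (hup : ∀ x, (M *ᵥ x) ⬝ᵥ x ≤ c * enorm2 x ^ 2)
    (hc : 0 ≤ c) : ‖M‖ ≤ c := by
  rw [← l2_opNorm_toEuclideanCLM,
    ContinuousLinearMap.norm_eq_iSup_rayleighQuotient _ (isSymmetric_toEuclideanLin_iff.2 hM)]
  refine ciSup_le fun x => ?_
  have hinner : inner ℝ (toEuclideanCLM (𝕜 := ℝ) M x) x = (M *ᵥ x.ofLp) ⬝ᵥ x.ofLp := by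
    rw [real_inner_comm, inner_toEuclideanCLM, dotProduct_comm]
  rw [ContinuousLinearMap.rayleighQuotient, ContinuousLinearMap.reApplyInnerSelf_apply,
    RCLike.re_to_real, hinner, abs_of_nonneg (div_nonneg (hpos _) (by positivity))]
  have hx := hup x.ofLp
  rw [enorm2_eq_norm] at hx
  exact div_le_of_le_mul₀ (by positivity) hc hx

lemma Matrix.IsHermitian.eigenvalues_eq_dotProduct_mulVec (hM : M.IsHermitian) (i : Fin N) :
    hM.eigenvalues i = (M *ᵥ hM.eigenvectorBasis i) ⬝ᵥ hM.eigenvectorBasis i := by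
  rw [hM.eigenvalues_eq, dotProduct_comm]
  simp

lemma Matrix.IsHermitian.enorm2_eigenvectorBasis (hM : M.IsHermitian) (i : Fin N) :
    enorm2 (hM.eigenvectorBasis i).ofLp = 1 := by
  rw [enorm2_eq_norm]
  exact hM.eigenvectorBasis.orthonormal.1 i

lemma pow_le_det_of_le_dotProduct_mulVec (hM : M.IsHermitian) (hc : 0 ≤ c)
    (hlow : ∀ x, c * enorm2 x ^ 2 ≤ (M *ᵥ x) ⬝ᵥ x) : c ^ N ≤ M.det := by
  have hle (i : Fin N) : c ≤ hM.eigenvalues i := by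
    simpa [hM.eigenvalues_eq_dotProduct_mulVec, hM.enorm2_eigenvectorBasis] using
      hlow (hM.eigenvectorBasis i)
  rw [hM.det_eq_prod_eigenvalues]
  simpa using Finset.prod_le_prod (s := Finset.univ) (fun _ _ => hc) fun i _ => hle i

lemma det_le_pow_of_dotProduct_mulVec_le (hM : M.IsHermitian)
    (hpos : ∀ x, 0 ≤ (M *ᵥ x) ⬝ᵥ x) (hup : ∀ x, (M *ᵥ x) ⬝ᵥ x ≤ c * enorm2 x ^ 2) :
    M.det ≤ c ^ N := by
  have hbounds (i : Fin N) : 0 ≤ hM.eigenvalues i ∧ hM.eigenvalues i ≤ c := by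
    simpa [hM.eigenvalues_eq_dotProduct_mulVec, hM.enorm2_eigenvectorBasis] using
      And.intro (hpos (hM.eigenvectorBasis i)) (hup (hM.eigenvectorBasis i))
  rw [hM.det_eq_prod_eigenvalues]
  simpa using
    Finset.prod_le_prod (s := Finset.univ) (fun i _ => (hbounds i).1) fun i _ => (hbounds i).2

lemma enorm2_inv_mulVec_bounds (hM : M.IsHermitian) (hc₁ : 0 < c₁) (hc₂ : 0 ≤ c₂)
    (hlow : ∀ x, c₁ * enorm2 x ^ 2 ≤ (M *ᵥ x) ⬝ᵥ x)
    (hup : ∀ x, (M *ᵥ x) ⬝ᵥ x ≤ c₂ * enorm2 x ^ 2) (x : Fin N → ℝ) :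
    c₂⁻¹ * enorm2 x ≤ enorm2 (M⁻¹ *ᵥ x) ∧ enorm2 (M⁻¹ *ᵥ x) ≤ c₁⁻¹ * enorm2 x := by
  have hpos (y : Fin N → ℝ) : 0 ≤ (M *ᵥ y) ⬝ᵥ y := le_trans (by positivity) (hlow y)
  have hdet : IsUnit M.det := isUnit_iff_ne_zero.2
    ((pow_pos hc₁ N).trans_le (pow_le_det_of_le_dotProduct_mulVec hM hc₁.le hlow)).ne'
  have hx : M *ᵥ (M⁻¹ *ᵥ x) = x := by rw [mulVec_mulVec, mul_nonsing_inv _ hdet, one_mulVec]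
  constructor
  · refine inv_mul_le_of_le_mul₀ hc₂ (enorm2_nonneg _) ?_
    calc enorm2 x = enorm2 (M *ᵥ (M⁻¹ *ᵥ x)) := by rw [hx]
      _ ≤ ‖M‖ * enorm2 (M⁻¹ *ᵥ x) := enorm2_mulVec_le _ _
      _ ≤ c₂ * enorm2 (M⁻¹ *ᵥ x) := mul_le_mul_of_nonneg_right
        (l2_opNorm_le_of_dotProduct_mulVec_le hM hpos hup hc₂) (enorm2_nonneg _)
  · rw [le_inv_mul_iff₀ hc₁]
    simpa [hx] using mul_enorm2_le_enorm2_mulVec hlow (M⁻¹ *ᵥ x)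

lemma le_dotProduct_mul_mul_transpose_mulVec {A A' Q : Matrix (Fin N) (Fin N) ℝ} {η : ℝ}
    (hη : 0 ≤ η) (hAA' : A * A' = 1) (hQ : ∀ y, η * enorm2 y ^ 2 ≤ (Q *ᵥ y) ⬝ᵥ y)
    (x : Fin N → ℝ) : η * enorm2 x ^ 2 ≤ ‖A'‖ ^ 2 * ((A * Q * Aᵀ) *ᵥ x) ⬝ᵥ x := by
  set y := Aᵀ *ᵥ x
  have hx : A'ᵀ *ᵥ y = x := by
    rw [mulVec_mulVec, ← transpose_mul, hAA', transpose_one, one_mulVec]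
  have hxy : enorm2 x ≤ ‖A'‖ * enorm2 y := by
    simpa [hx, Matrix.l2_opNorm_transpose] using enorm2_mulVec_le A'ᵀ y
  calc η * enorm2 x ^ 2 ≤ η * (‖A'‖ * enorm2 y) ^ 2 := by gcongr; exact enorm2_nonneg x
    _ = ‖A'‖ ^ 2 * (η * enorm2 y ^ 2) := by ring
    _ ≤ ‖A'‖ ^ 2 * ((A * Q * Aᵀ) *ᵥ x) ⬝ᵥ x := by
      rw [Matrix.dotProduct_mul_mul_transpose_mulVec]; gcongr; exact hQ y

end QuadraticFormBounds

section Integrals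

lemma integrableOn_exp_neg_mul_sub_Ioi {c : ℝ} (hc : 0 < c) (r : ℝ) :
    IntegrableOn (fun ξ => exp (-c * (ξ - r))) (Ioi r) := by
  have h (ξ : ℝ) : exp (-c * (ξ - r)) = exp (-c * ξ) * exp (c * r) := by
    rw [← exp_add]; ring_nf
  simp_rw [h]
  exact (integrableOn_exp_mul_Ioi (neg_lt_zero.2 hc) r).mul_const _

lemma integral_exp_neg_mul_sub_Ioi {c : ℝ} (hc : 0 < c) (r : ℝ) :
    ∫ ξ in Ioi r, exp (-c * (ξ - r)) = c⁻¹ := by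
  have h (ξ : ℝ) : exp (-c * (ξ - r)) = exp (-c * ξ) * exp (c * r) := by
    rw [← exp_add]; ring_nf
  simp_rw [h]
  rw [integral_mul_const, integral_exp_mul_Ioi (neg_lt_zero.2 hc), neg_div_neg_eq,
    div_mul_eq_mul_div, ← exp_add]
  simp

variable {n : Type*} [Fintype n] [DecidableEq n]

def Matrix.dotProductMulVecCLM (x : n → ℝ) : Matrix n n ℝ →L[ℝ] ℝ :=
  LinearMap.toContinuousLinearMap
    { toFun := fun A => (A *ᵥ x) ⬝ᵥ x
      map_add' := fun A B => by simp [add_mulVec]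
      map_smul' := fun c A => by simp [smul_mulVec] }

variable {α : Type*} [MeasurableSpace α] {μ : Measure α}

lemma Matrix.integral_apply {f : α → Matrix n n ℝ} (hf : Integrable f μ) (i j : n) :
    (∫ a, f a ∂μ) i j = ∫ a, f a i j ∂μ :=
  ((entryLinearMap ℝ ℝ i j).toContinuousLinearMap.integral_comp_comm hf).symm

lemma Matrix.integrable_dotProduct_mulVec {f : α → Matrix n n ℝ} (hf : Integrable f μ)
    (x : n → ℝ) : Integrable (fun a => (f a *ᵥ x) ⬝ᵥ x) μ :=
  (dotProductMulVecCLM x).integrable_comp hf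

lemma Matrix.integral_dotProduct_mulVec {f : α → Matrix n n ℝ} (hf : Integrable f μ)
    (x : n → ℝ) : ∫ a, (f a *ᵥ x) ⬝ᵥ x ∂μ = ((∫ a, f a ∂μ) *ᵥ x) ⬝ᵥ x :=
  (dotProductMulVecCLM x).integral_comp_comm hf

variable {f : ℝ → Matrix n n ℝ} {r a c : ℝ}

lemma div_le_dotProduct_setIntegral_mulVec (hf : IntegrableOn f (Ioi r)) (hc : 0 < c)
    (x : n → ℝ) (hlow : ∀ ξ ∈ Ioi r, a * exp (-c * (ξ - r)) ≤ (f ξ *ᵥ x) ⬝ᵥ x) :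
    a / c ≤ ((∫ ξ in Ioi r, f ξ) *ᵥ x) ⬝ᵥ x := by
  rw [← Matrix.integral_dotProduct_mulVec hf, div_eq_mul_inv, ← integral_exp_neg_mul_sub_Ioi hc r,
    ← integral_const_mul]
  exact setIntegral_mono_on ((integrableOn_exp_neg_mul_sub_Ioi hc r).const_mul a)
    (Matrix.integrable_dotProduct_mulVec hf x) measurableSet_Ioi hlow

lemma dotProduct_setIntegral_mulVec_le_div (hf : IntegrableOn f (Ioi r)) (hc : 0 < c)
    (x : n → ℝ) (hup : ∀ ξ ∈ Ioi r, (f ξ *ᵥ x) ⬝ᵥ x ≤ a * exp (-c * (ξ - r))) :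
    ((∫ ξ in Ioi r, f ξ) *ᵥ x) ⬝ᵥ x ≤ a / c := by
  rw [← Matrix.integral_dotProduct_mulVec hf, div_eq_mul_inv, ← integral_exp_neg_mul_sub_Ioi hc r,
    ← integral_const_mul]
  exact setIntegral_mono_on (Matrix.integrable_dotProduct_mulVec hf x)
    ((integrableOn_exp_neg_mul_sub_Ioi hc r).const_mul a) measurableSet_Ioi hup

end Integrals

section EvolutionFamily

variable {n : Type*} [Fintype n] [DecidableEq n] {B : ℝ → Matrix n n ℝ}
  {U : ℝ → ℝ → Matrix n n ℝ} {K : ℝ}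

lemma evolution_mul_evolution (hB : ∀ s, ‖B s‖ ≤ K) (hU0 : ∀ r, U r r = 1)
    (hU : ∀ r s, HasDerivAt (fun t => U t r) (B s * U s r) s) (r ξ : ℝ) :
    U r ξ * U ξ r = 1 := by
  have hlip (t : ℝ) : LipschitzOnWith K.toNNReal (fun Y => B t * Y) univ := by
    refine (LipschitzWith.of_dist_le_mul fun Y Z => ?_).lipschitzOnWith
    rw [dist_eq_norm, dist_eq_norm, ← mul_sub]
    exact (norm_mul_le _ _).trans (by gcongr; exact (hB t).trans (le_coe_toNNReal K))
  -- both sides solve `Y' = B Y` and agree at `t = ξ`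
  have huniq := ODE_solution_unique_univ (v := fun t Y => B t * Y) (s := fun _ => univ)
    (f := fun t => U t ξ * U ξ r) (g := fun t => U t r) (t₀ := ξ) hlip
    (fun t => ⟨by simpa [mul_assoc] using (hU ξ t).mul_const (U ξ r), mem_univ _⟩)
    (fun t => ⟨hU r t, mem_univ _⟩) (by simp [hU0])
  simpa [hU0] using congrFun huniq r

lemma norm_evolution_le (hB : ∀ s, ‖B s‖ ≤ K) (hU0 : ∀ r, U r r = 1)
    (hU : ∀ r s, HasDerivAt (fun t => U t r) (B s * U s r) s) {r s : ℝ} (hrs : r ≤ s) :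
    ‖U s r‖ ≤ exp (K * (s - r)) := by
  have hgronwall := norm_le_gronwallBound_of_norm_deriv_right_le (f := fun t => U t r)
    (δ := 1) (ε := 0) (fun t _ => (hU r t).continuousAt.continuousWithinAt)
    (fun t _ => (hU r t).hasDerivWithinAt) (by simpa [hU0] using l2_opNorm_one_le)
    (fun t _ => by simpa using (norm_mul_le _ _).trans (by gcongr; exact hB t)) s ⟨hrs, le_rfl⟩
  simpa [gronwallBound_ε0] using hgronwall

lemma continuous_evolution_right (hB : ∀ s, ‖B s‖ ≤ K) (hU0 : ∀ r, U r r = 1)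
    (hU : ∀ r s, HasDerivAt (fun t => U t r) (B s * U s r) s) (r : ℝ) :
    Continuous fun ξ => U r ξ := by
  let u (η : ℝ) : (Matrix n n ℝ)ˣ := ⟨U η r, U r η, evolution_mul_evolution hB hU0 hU η r,
    evolution_mul_evolution hB hU0 hU r η⟩
  have hinv : (fun η => U r η) = fun η => Ring.inverse (U η r) :=
    funext fun η => (Ring.inverse_unit (u η)).symm
  rw [hinv, continuous_iff_continuousAt]
  exact fun ξ =>
    (NormedRing.inverse_continuousAt (u ξ)).comp (f := fun η => U η r) (hU r ξ).continuousAt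

end EvolutionFamily

section Covariance

variable {n : Type*} [Fintype n] [DecidableEq n]

def covariance (U : ℝ → ℝ → Matrix n n ℝ) (Q : ℝ → Matrix n n ℝ) (r : ℝ) : Matrix n n ℝ :=
  ∫ ξ in Ioi r, U r ξ * Q ξ * (U r ξ)ᵀ

variable {Q : ℝ → Matrix n n ℝ} {U : ℝ → ℝ → Matrix n n ℝ} {C₀ ω q r : ℝ}

lemma covariance_isHermitian (hQsym : ∀ s, (Q s)ᵀ = Q s) (r : ℝ) :
    (covariance U Q r).IsHermitian := by
  let e : Matrix n n ℝ ≃L[ℝ] Matrix n n ℝ :=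
    (transposeLinearEquiv n n ℝ ℝ).toContinuousLinearEquiv
  have hsymm (ξ : ℝ) : e (U r ξ * Q ξ * (U r ξ)ᵀ) = U r ξ * Q ξ * (U r ξ)ᵀ := by
    simp [e, transpose_mul, hQsym, mul_assoc]
  rw [IsHermitian, conjTranspose_eq_transpose_of_trivial]
  have h := e.integral_comp_comm (μ := volume.restrict (Ioi r)) fun ξ => U r ξ * Q ξ * (U r ξ)ᵀ
  simp only [hsymm] at h
  exact h.symm

lemma integrableOn_evolution_conj (hω : 0 < ω) (hQc : Continuous Q) (hQ : ∀ s, ‖Q s‖ ≤ q)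
    (hUc : Continuous fun ξ => U r ξ)
    (hdecay : ∀ ξ, r ≤ ξ → ‖U r ξ‖ ≤ C₀ * exp (-ω * (ξ - r))) :
    IntegrableOn (fun ξ => U r ξ * Q ξ * (U r ξ)ᵀ) (Ioi r) := by
  refine Integrable.mono'
    ((integrableOn_exp_neg_mul_sub_Ioi (c := 2 * ω) (by positivity) r).const_mul (C₀ ^ 2 * q))
    ((hUc.mul hQc).mul hUc.matrix_transpose).aestronglyMeasurable ?_
  refine (ae_restrict_iff' measurableSet_Ioi).2 (ae_of_all _ fun ξ hξ => ?_)
  exact l2_opNorm_mul_mul_transpose_le_exp (hdecay ξ (le_of_lt hξ)) (hQ ξ)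

end Covariance

section CovarianceBounds

variable {N : ℕ} {B Q : ℝ → Matrix (Fin N) (Fin N) ℝ} {U : ℝ → ℝ → Matrix (Fin N) (Fin N) ℝ}
  {K η C₀ ω q r : ℝ}

lemma mul_exp_le_dotProduct_evolution_conj_mulVec {P : Matrix (Fin N) (Fin N) ℝ} {ξ : ℝ}
    (hB : ∀ s, ‖B s‖ ≤ K) (hU0 : ∀ r, U r r = 1)
    (hU : ∀ r s, HasDerivAt (fun t => U t r) (B s * U s r) s) (hη : 0 ≤ η)
    (hP : ∀ y, η * enorm2 y ^ 2 ≤ (P *ᵥ y) ⬝ᵥ y) (hrξ : r ≤ ξ) (x : Fin N → ℝ) :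
    η * enorm2 x ^ 2 * exp (-(2 * K) * (ξ - r)) ≤ ((U r ξ * P * (U r ξ)ᵀ) *ᵥ x) ⬝ᵥ x := by
  have hq : 0 ≤ ((U r ξ * P * (U r ξ)ᵀ) *ᵥ x) ⬝ᵥ x := by
    rw [Matrix.dotProduct_mul_mul_transpose_mulVec]
    exact le_trans (by positivity) (hP _)
  set q := ((U r ξ * P * (U r ξ)ᵀ) *ᵥ x) ⬝ᵥ x
  have hgrowth : ‖U ξ r‖ ^ 2 ≤ exp (2 * K * (ξ - r)) := by
    rw [show 2 * K * (ξ - r) = K * (ξ - r) + K * (ξ - r) by ring, exp_add, ← sq]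
    gcongr
    exact norm_evolution_le hB hU0 hU hrξ
  calc η * enorm2 x ^ 2 * exp (-(2 * K) * (ξ - r))
      ≤ ‖U ξ r‖ ^ 2 * q * exp (-(2 * K) * (ξ - r)) :=
        mul_le_mul_of_nonneg_right (le_dotProduct_mul_mul_transpose_mulVec hη
          (evolution_mul_evolution hB hU0 hU r ξ) hP x) (exp_pos _).le
    _ ≤ exp (2 * K * (ξ - r)) * q * exp (-(2 * K) * (ξ - r)) := by gcongr
    _ = q := by rw [mul_right_comm, ← exp_add]; ring_nf; simp

lemma le_dotProduct_covariance_mulVec (hK : 0 < K) (hB : ∀ s, ‖B s‖ ≤ K)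
    (hU0 : ∀ r, U r r = 1) (hU : ∀ r s, HasDerivAt (fun t => U t r) (B s * U s r) s)
    (hη : 0 ≤ η) (hQell : ∀ s y, η * enorm2 y ^ 2 ≤ (Q s *ᵥ y) ⬝ᵥ y)
    (hF : IntegrableOn (fun ξ => U r ξ * Q ξ * (U r ξ)ᵀ) (Ioi r)) (x : Fin N → ℝ) :
    η / (2 * K) * enorm2 x ^ 2 ≤ (covariance U Q r *ᵥ x) ⬝ᵥ x := by
  rw [div_mul_eq_mul_div]
  exact div_le_dotProduct_setIntegral_mulVec hF (by positivity) x fun ξ hξ =>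
    mul_exp_le_dotProduct_evolution_conj_mulVec hB hU0 hU hη (hQell ξ) hξ.le x

lemma dotProduct_covariance_mulVec_le (hω : 0 < ω) (hQ : ∀ s, ‖Q s‖ ≤ q)
    (hdecay : ∀ ξ, r ≤ ξ → ‖U r ξ‖ ≤ C₀ * exp (-ω * (ξ - r)))
    (hF : IntegrableOn (fun ξ => U r ξ * Q ξ * (U r ξ)ᵀ) (Ioi r)) (x : Fin N → ℝ) :
    (covariance U Q r *ᵥ x) ⬝ᵥ x ≤ C₀ ^ 2 * q / (2 * ω) * enorm2 x ^ 2 := by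
  rw [div_mul_eq_mul_div]
  refine dotProduct_setIntegral_mulVec_le_div hF (by positivity) x fun ξ hξ => ?_
  calc ((U r ξ * Q ξ * (U r ξ)ᵀ) *ᵥ x) ⬝ᵥ x ≤ ‖U r ξ * Q ξ * (U r ξ)ᵀ‖ * enorm2 x ^ 2 :=
        dotProduct_mulVec_le _ x
    _ ≤ C₀ ^ 2 * q * exp (-(2 * ω) * (ξ - r)) * enorm2 x ^ 2 := by
        gcongr
        exact l2_opNorm_mul_mul_transpose_le_exp (hdecay ξ hξ.le) (hQ ξ)
    _ = C₀ ^ 2 * q * enorm2 x ^ 2 * exp (-(2 * ω) * (ξ - r)) := by ring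

end CovarianceBounds

theorem statement0_general (N : ℕ)
    (Q B : ℝ → Matrix (Fin N) (Fin N) ℝ)
    -- q_{ij} ∈ C_b^1(ℝ)
    (hQreg : ∀ i j, ContDiff ℝ 1 fun s => Q s i j)
    (hQbd : ∃ C : ℝ, ∀ (s : ℝ) (i j : Fin N),
      |Q s i j| ≤ C ∧ |deriv (fun t => Q t i j) s| ≤ C)
    -- b_{ij} ∈ C_b(ℝ)
    (hBbd : ∃ C : ℝ, ∀ (s : ℝ) (i j : Fin N), |B s i j| ≤ C)
    -- Q(s) symmetric and uniformly elliptic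
    (hQsym : ∀ s, (Q s)ᵀ = Q s)
    (η₀ : ℝ) (hη₀ : 0 < η₀)
    (hQell : ∀ (s : ℝ) (ξ : Fin N → ℝ),
      η₀ * enorm2 ξ ^ 2 ≤ ∑ i, (Q s).mulVec ξ i * ξ i)
    -- U(·,r) is the solution of D_s U(s,r) = B(s) U(s,r), U(r,r) = I
    (U : ℝ → ℝ → Matrix (Fin N) (Fin N) ℝ)
    (hU0 : ∀ r, U r r = 1)
    (hUderiv : ∀ (r s : ℝ) (i j : Fin N),
      HasDerivAt (fun t => U t r i j) ((B s * U s r) i j) s)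
    -- exponential decay: ‖U(r,s)‖ ≤ C₀ e^{-ω(s-r)} for s ≥ r
    (C₀ ω : ℝ) (hC₀ : 0 < C₀) (hω : 0 < ω)
    (hdecay : ∀ r s : ℝ, r ≤ s → opNorm (U r s) ≤ C₀ * Real.exp (-ω * (s - r)))
    -- Q_s = ∫_s^∞ U(s,ξ) Q(ξ) U(s,ξ)* dξ
    (Qs : ℝ → Matrix (Fin N) (Fin N) ℝ)
    (hQs : ∀ (s : ℝ) (i j : Fin N),
      Qs s i j = ∫ ξ in Set.Ioi s, (U s ξ * Q ξ * (U s ξ)ᵀ) i j) :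
    ∃ C₁ C₂ : ℝ, 0 < C₁ ∧ 0 < C₂ ∧
      ∀ (r : ℝ) (x : Fin N → ℝ),
        (C₁ * enorm2 x ^ 2 ≤ ∑ i, (Qs r).mulVec x i * x i ∧
          ∑ i, (Qs r).mulVec x i * x i ≤ C₂ * enorm2 x ^ 2) ∧
        (C₂⁻¹ * enorm2 x ≤ enorm2 ((Qs r)⁻¹.mulVec x) ∧
          enorm2 ((Qs r)⁻¹.mulVec x) ≤ C₁⁻¹ * enorm2 x) ∧
        (C₁ ^ N ≤ (Qs r).det ∧ (Qs r).det ≤ C₂ ^ N) := by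
  obtain ⟨K, hK, hB⟩ := Matrix.exists_l2_opNorm_le_of_abs_le hBbd
  obtain ⟨CQ, hCQ, hQ⟩ :=
    Matrix.exists_l2_opNorm_le_of_abs_le (A := Q) (hQbd.imp fun _ h s i j => (h s i j).1)
  have hU (r s : ℝ) : HasDerivAt (fun t => U t r) (B s * U s r) s :=
    Matrix.hasDerivAt_of_hasDerivAt_entries (hUderiv r s)
  have hQc : Continuous Q := continuous_pi fun i => continuous_pi fun j => (hQreg i j).continuous
  have hF (r : ℝ) : IntegrableOn (fun ξ => U r ξ * Q ξ * (U r ξ)ᵀ) (Ioi r) :=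
    integrableOn_evolution_conj hω hQc hQ (continuous_evolution_right hB hU0 hU r) (hdecay r)
  have hQs_eq (r : ℝ) : Qs r = covariance U Q r := by
    ext i j
    rw [hQs, covariance, Matrix.integral_apply (hF r)]
  have hlow (r : ℝ) (x : Fin N → ℝ) : η₀ / (2 * K) * enorm2 x ^ 2 ≤ (Qs r *ᵥ x) ⬝ᵥ x :=
    hQs_eq r ▸ le_dotProduct_covariance_mulVec hK hB hU0 hU hη₀.le hQell (hF r) x
  have hup (r : ℝ) (x : Fin N → ℝ) : (Qs r *ᵥ x) ⬝ᵥ x ≤ C₀ ^ 2 * CQ / (2 * ω) * enorm2 x ^ 2 :=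
    hQs_eq r ▸ dotProduct_covariance_mulVec_le hω hQ (hdecay r) (hF r) x
  have hQs_symm (r : ℝ) : (Qs r).IsHermitian := hQs_eq r ▸ covariance_isHermitian hQsym r
  have hpos (r : ℝ) (x : Fin N → ℝ) : 0 ≤ (Qs r *ᵥ x) ⬝ᵥ x := le_trans (by positivity) (hlow r x)
  refine ⟨η₀ / (2 * K), C₀ ^ 2 * CQ / (2 * ω), by positivity, by positivity, fun r x =>
    ⟨⟨hlow r x, hup r x⟩, ?_, ?_, ?_⟩⟩
  · exact enorm2_inv_mulVec_bounds (hQs_symm r) (by positivity) (by positivity) (hlow r) (hup r) x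
  · exact pow_le_det_of_le_dotProduct_mulVec (hQs_symm r) (by positivity) (hlow r)
  · exact det_le_pow_of_dotProduct_mulVec_le (hQs_symm r) (hpos r) (hup r)

/-- Lemma on the covariance matrices `Q_r` of the invariant measures:
under the Ornstein-Uhlenbeck hypotheses there are constants `C₁, C₂ > 0` with
`C₁|x|² ≤ ⟨Q_r x, x⟩ ≤ C₂|x|²`, `C₂⁻¹|x| ≤ |Q_r⁻¹ x| ≤ C₁⁻¹|x|` and
`C₁^N ≤ det Q_r ≤ C₂^N` for all `r ∈ ℝ`, `x ∈ ℝ^N`. -/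
theorem statement0 (N : ℕ) (hN : 1 ≤ N)
    (Q B : ℝ → Matrix (Fin N) (Fin N) ℝ)
    -- q_{ij} ∈ C_b^1(ℝ)
    (hQreg : ∀ i j, ContDiff ℝ 1 fun s => Q s i j)
    (hQbd : ∃ C : ℝ, ∀ (s : ℝ) (i j : Fin N),
      |Q s i j| ≤ C ∧ |deriv (fun t => Q t i j) s| ≤ C)
    -- b_{ij} ∈ C_b(ℝ)
    (hBcont : ∀ i j, Continuous fun s => B s i j)
    (hBbd : ∃ C : ℝ, ∀ (s : ℝ) (i j : Fin N), |B s i j| ≤ C)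
    -- Q(s) symmetric and uniformly elliptic
    (hQsym : ∀ s, (Q s)ᵀ = Q s)
    (η₀ : ℝ) (hη₀ : 0 < η₀)
    (hQell : ∀ (s : ℝ) (ξ : Fin N → ℝ),
      η₀ * enorm2 ξ ^ 2 ≤ ∑ i, (Q s).mulVec ξ i * ξ i)
    -- U(·,r) is the solution of D_s U(s,r) = B(s) U(s,r), U(r,r) = I
    (U : ℝ → ℝ → Matrix (Fin N) (Fin N) ℝ)
    (hU0 : ∀ r, U r r = 1)
    (hUderiv : ∀ (r s : ℝ) (i j : Fin N),
      HasDerivAt (fun t => U t r i j) ((B s * U s r) i j) s)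
    -- exponential decay: ‖U(r,s)‖ ≤ C₀ e^{-ω(s-r)} for s ≥ r
    (C₀ ω : ℝ) (hC₀ : 0 < C₀) (hω : 0 < ω)
    (hdecay : ∀ r s : ℝ, r ≤ s → opNorm (U r s) ≤ C₀ * Real.exp (-ω * (s - r)))
    -- Q_s = ∫_s^∞ U(s,ξ) Q(ξ) U(s,ξ)* dξ
    (Qs : ℝ → Matrix (Fin N) (Fin N) ℝ)
    (hQs : ∀ (s : ℝ) (i j : Fin N),
      Qs s i j = ∫ ξ in Set.Ioi s, (U s ξ * Q ξ * (U s ξ)ᵀ) i j) :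
    ∃ C₁ C₂ : ℝ, 0 < C₁ ∧ 0 < C₂ ∧
      ∀ (r : ℝ) (x : Fin N → ℝ),
        (C₁ * enorm2 x ^ 2 ≤ ∑ i, (Qs r).mulVec x i * x i ∧
          ∑ i, (Qs r).mulVec x i * x i ≤ C₂ * enorm2 x ^ 2) ∧
        (C₂⁻¹ * enorm2 x ≤ enorm2 ((Qs r)⁻¹.mulVec x) ∧
          enorm2 ((Qs r)⁻¹.mulVec x) ≤ C₁⁻¹ * enorm2 x) ∧
        (C₁ ^ N ≤ (Qs r).det ∧ (Qs r).det ≤ C₂ ^ N) :=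
  statement0_general N Q B hQreg hQbd hBbd hQsym η₀ hη₀ hQell U hU0 hUderiv C₀ ω hC₀ hω hdecay Qs
    hQs
end
end

section
/- Let 1 ≤ p < +∞. Let a : ℝ^{1+N} → ℝ^{N×N} have entries a_{ij} ∈ C_b^1(ℝ^{1+N}) with a_{ij} = a_{ji} and ⟨a(s,x)ξ, ξ⟩ ≥ η₀|ξ|² for all x, ξ ∈ ℝ^N, s ∈ ℝ and some η₀ > 0. Let F ∈ C^{0,1}(ℝ^{1+N}, ℝ^N), V ∈ L^p_loc(ℝ^{1+N}) with V + (1/p) div_x F ≥ 0 almost everywhere. Then for every u ∈ C_c^∞(ℝ^{1+N}) and every λ > 0: ‖λu − 𝓛u‖_{L^p(ℝ^{1+N})} ≥ λ‖u‖_{L^p(ℝ^{1+N})}, where 𝓛u = div_x(a ∇_x u) + F·∇_x u − Vu − D_s u. (That is, 𝓛 with domain C_c^∞(ℝ^{1+N}) is dissipative in L^p(ℝ^{1+N}).) -/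
noncomputable section
open MeasureTheory Real Set Filter ENNReal NNReal Matrix Topology

/-- Points of `ℝ^{1+N}`, written as `(s, x)` with `s ∈ ℝ` (time) and `x ∈ ℝ^N` (space). -/
abbrev Pt (N : ℕ) := ℝ × (Fin N → ℝ)

/-- The time derivative `D_s u`. -/
def pT {N : ℕ} (u : Pt N → ℝ) (q : Pt N) : ℝ := fderiv ℝ u q (1, 0)

/-- The spatial partial derivative `D_j u`. -/
def pX {N : ℕ} (j : Fin N) (u : Pt N → ℝ) (q : Pt N) : ℝ :=
  fderiv ℝ u q (0, Pi.single j 1)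

/-- The spatial gradient `∇_x u`. -/
def gradX {N : ℕ} (u : Pt N → ℝ) (q : Pt N) : Fin N → ℝ := fun j => pX j u q

/-- The spatial Laplacian `Δu = D_1² u + … + D_N² u`. -/
def lapX {N : ℕ} (u : Pt N → ℝ) (q : Pt N) : ℝ := ∑ j, pX j (pX j u) q

/-- The spatial divergence `div_x F` of a (spatially differentiable) vector field,
computed via spatial Fréchet derivatives. -/
def divXs {N : ℕ} (F : Pt N → Fin N → ℝ) (q : Pt N) : ℝ :=
  ∑ j, fderiv ℝ (fun x => F (q.1, x) j) q.2 (Pi.single j 1)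

/-- The second-order term in divergence form, `div_x (a ∇_x u)`. -/
def divAGrad {N : ℕ} (a : Pt N → Matrix (Fin N) (Fin N) ℝ) (u : Pt N → ℝ)
    (q : Pt N) : ℝ :=
  ∑ i, pX i (fun r => ∑ j, a r i j * pX j u r) q

instance instHaarPt (N : ℕ) : (volume : Measure (Pt N)).IsAddHaarMeasure :=
  Measure.prod.instIsAddHaarMeasure _ _

lemma cont_fderiv_apply {N : ℕ} {f : Pt N → ℝ} (h : ContDiff ℝ 1 f) (v : Pt N) :
    Continuous fun q => fderiv ℝ f q v :=
  (ContinuousLinearMap.apply ℝ ℝ v).continuous.comp (h.continuous_fderiv one_ne_zero)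

lemma integral_fderiv_apply_eq_zero {N : ℕ} {φ : Pt N → ℝ} (hφ : ContDiff ℝ 1 φ)
    (hc : HasCompactSupport φ) (v : Pt N) : ∫ q, fderiv ℝ φ q v = 0 := by
  obtain ⟨r, hKr⟩ := hc.isBounded.subset_ball (0 : Pt N)
  set R := max r 1 with hR
  have hR0 : (0:ℝ) < R := lt_of_lt_of_le one_pos (le_max_right _ _)
  have hKR : tsupport φ ⊆ Metric.ball 0 R :=
    hKr.trans (Metric.ball_subset_ball (le_max_left _ _))
  let b : ContDiffBump (0 : Pt N) := ⟨R, R + 1, hR0, by linarith⟩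
  have hb1 : ∀ q ∈ Metric.ball (0 : Pt N) R, (b : Pt N → ℝ) q = 1 := fun q hq =>
    b.one_of_mem_closedBall (Metric.ball_subset_closedBall hq)
  have hbs : HasCompactSupport (b : Pt N → ℝ) := b.hasCompactSupport
  have hbd : ContDiff ℝ 1 (b : Pt N → ℝ) := b.contDiff
  have hLHS : ∀ q, (b : Pt N → ℝ) q * fderiv ℝ φ q v = fderiv ℝ φ q v := by
    intro q
    by_cases hq : q ∈ tsupport φ
    · rw [hb1 q (hKR hq), one_mul]
    · have : fderiv ℝ φ q = 0 := by
        have := support_fderiv_subset ℝ (f := φ)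
        exact Function.notMem_support.1 (fun hmem => hq (this hmem))
      simp [this]
  have hRHS : ∀ q, fderiv ℝ (b : Pt N → ℝ) q v * φ q = 0 := by
    intro q
    by_cases hq : q ∈ Metric.ball (0 : Pt N) R
    · have hev : (b : Pt N → ℝ) =ᶠ[𝓝 q] fun _ => 1 :=
        Filter.eventually_of_mem (Metric.isOpen_ball.mem_nhds hq) hb1
      have : fderiv ℝ (b : Pt N → ℝ) q = 0 := by
        rw [hev.fderiv_eq]; exact fderiv_const_apply 1
      simp [this]
    · have : φ q = 0 := image_eq_zero_of_notMem_tsupport (fun h => hq (hKR h))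
      simp [this]
  have hint1 : Integrable (fun q => fderiv ℝ (b : Pt N → ℝ) q v * φ q) volume := by
    apply Continuous.integrable_of_hasCompactSupport
    · exact (cont_fderiv_apply hbd v).mul hφ.continuous
    · exact hc.mul_left
  have hint2 : Integrable (fun q => (b : Pt N → ℝ) q * fderiv ℝ φ q v) volume := by
    apply Continuous.integrable_of_hasCompactSupport
    · exact hbd.continuous.mul (cont_fderiv_apply hφ v)
    · exact hbs.mul_right
  have hint3 : Integrable (fun q => (b : Pt N → ℝ) q * φ q) volume := by
    apply Continuous.integrable_of_hasCompactSupport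
    · exact hbd.continuous.mul hφ.continuous
    · exact hbs.mul_right
  have key := integral_mul_fderiv_eq_neg_fderiv_mul_of_integrable
    (f := (b : Pt N → ℝ)) (g := φ) (v := v) (μ := volume)
    hint1 hint2 hint3 (fun x _ => hbd.differentiable one_ne_zero x) (fun x _ => hφ.differentiable one_ne_zero x)
  calc ∫ q, fderiv ℝ φ q v = ∫ q, (b : Pt N → ℝ) q * fderiv ℝ φ q v := by
        simp_rw [hLHS]
    _ = -∫ q, fderiv ℝ (b : Pt N → ℝ) q v * φ q := key
    _ = 0 := by simp_rw [hRHS]; simp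

/-- weight function `g_ε(t) = t (t²+ε²)^{(p-2)/2}`. -/
def gee (p ε t : ℝ) : ℝ := t * (t ^ 2 + ε ^ 2) ^ ((p - 2) / 2)

/-- its derivative -/
def gee' (p ε t : ℝ) : ℝ := (t ^ 2 + ε ^ 2) ^ ((p - 4) / 2) * ((p - 1) * t ^ 2 + ε ^ 2)

/-- primitive `G_ε` of `g_ε` with `G_ε(0)=0`. -/
def Gee (p ε t : ℝ) : ℝ := ((t ^ 2 + ε ^ 2) ^ (p / 2) - ε ^ p) / p

section GeeLemmas
variable {p ε t : ℝ}

lemma base_pos (hε : 0 < ε) (t : ℝ) : 0 < t ^ 2 + ε ^ 2 := by positivity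

lemma hasDerivAt_base (hε : 0 < ε) (c t : ℝ) :
    HasDerivAt (fun t : ℝ => (t ^ 2 + ε ^ 2) ^ c) (c * (t ^ 2 + ε ^ 2) ^ (c - 1) * (2 * t)) t := by
  have h1 : HasDerivAt (fun t : ℝ => t ^ 2 + ε ^ 2) (2 * t) t := by
    simpa using ((hasDerivAt_id t).pow 2).add_const (ε ^ 2)
  have h2 := (Real.hasDerivAt_rpow_const (x := t ^ 2 + ε ^ 2) (p := c)
    (Or.inl (base_pos hε t).ne'))
  exact h2.comp t h1

lemma hasDerivAt_gee (hε : 0 < ε) (t : ℝ) : HasDerivAt (gee p ε) (gee' p ε t) t := by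
  have h := ((hasDerivAt_id t).mul (hasDerivAt_base hε ((p - 2) / 2) t))
  refine h.congr_deriv ?_
  have hb := (base_pos hε t).ne'
  have e1 : (t ^ 2 + ε ^ 2) ^ ((p - 2) / 2) = (t ^ 2 + ε ^ 2) ^ ((p - 4) / 2) * (t ^ 2 + ε ^ 2) := by
    rw [← Real.rpow_add_one hb]; ring_nf
  have e2 : (t ^ 2 + ε ^ 2) ^ ((p - 2) / 2 - 1) = (t ^ 2 + ε ^ 2) ^ ((p - 4) / 2) := by
    rw [show (p - 2) / 2 - 1 = (p - 4) / 2 by ring]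
  rw [gee', e2, e1]
  simp only [id_eq]
  ring

lemma gee'_nonneg (hp : 1 ≤ p) (hε : 0 < ε) (t : ℝ) : 0 ≤ gee' p ε t := by
  have h1 : (0:ℝ) ≤ (t ^ 2 + ε ^ 2) ^ ((p - 4) / 2) := Real.rpow_nonneg (base_pos hε t).le _
  have h2 : (0:ℝ) ≤ (p - 1) * t ^ 2 + ε ^ 2 := by nlinarith [sq_nonneg t, sq_nonneg ε]
  exact mul_nonneg h1 h2

lemma hasDerivAt_Gee (hp : 1 ≤ p) (hε : 0 < ε) (t : ℝ) :
    HasDerivAt (Gee p ε) (gee p ε t) t := by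
  have hp0 : p ≠ 0 := by positivity
  have h := ((hasDerivAt_base hε (p / 2) t).sub_const (ε ^ p)).div_const p
  refine h.congr_deriv ?_
  have e2 : p / 2 - 1 = (p - 2) / 2 := by ring
  rw [gee, e2]
  field_simp

lemma continuous_rpow_base (hε : 0 < ε) (c : ℝ) :
    Continuous fun t : ℝ => (t ^ 2 + ε ^ 2) ^ c := by
  apply Continuous.rpow_const (by fun_prop) (fun t => Or.inl (base_pos hε t).ne')

lemma continuous_gee (hε : 0 < ε) : Continuous (gee p ε) :=
  continuous_id.mul (continuous_rpow_base hε _)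

lemma continuous_gee' (hε : 0 < ε) : Continuous (gee' p ε) :=
  (continuous_rpow_base hε _).mul (by fun_prop)

lemma continuous_Gee (hε : 0 < ε) : Continuous (Gee p ε) :=
  (((continuous_rpow_base hε _).sub continuous_const).div_const p)

lemma contDiff_gee (hε : 0 < ε) : ContDiff ℝ 1 (gee p ε) := by
  rw [contDiff_iff_contDiffAt]
  intro t
  have : ContDiffAt ℝ 1 (fun t : ℝ => (t ^ 2 + ε ^ 2) ^ ((p - 2) / 2)) t := by
    apply ContDiffAt.rpow_const_of_ne
    · fun_prop
    · exact (base_pos hε t).ne'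
  exact contDiffAt_id.mul this

lemma contDiff_Gee (hε : 0 < ε) : ContDiff ℝ 1 (Gee p ε) := by
  rw [contDiff_iff_contDiffAt]
  intro t
  have : ContDiffAt ℝ 1 (fun t : ℝ => (t ^ 2 + ε ^ 2) ^ (p / 2)) t := by
    apply ContDiffAt.rpow_const_of_ne
    · fun_prop
    · exact (base_pos hε t).ne'
  exact (this.sub contDiffAt_const).div_const p

lemma gee_zero (hε : 0 < ε) : gee p ε 0 = 0 := by simp [gee]

lemma sq_rpow_half (hε : 0 < ε) (c : ℝ) : (ε ^ 2) ^ (c / 2) = ε ^ c := by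
  rw [← Real.rpow_natCast ε 2, ← Real.rpow_mul hε.le,
    show ((2:ℕ):ℝ) * (c / 2) = c by push_cast; ring]

lemma Gee_zero (hε : 0 < ε) : Gee p ε 0 = 0 := by
  simp [Gee, sq_rpow_half hε p]

lemma rpow_sq_abs (t c : ℝ) : (t ^ 2) ^ (c / 2) = |t| ^ c := by
  rw [← sq_abs, ← Real.rpow_natCast |t| 2, ← Real.rpow_mul (abs_nonneg t),
    show ((2:ℕ):ℝ) * (c / 2) = c by push_cast; ring]

variable {B : ℝ}

lemma abs_le_rpow_half (hε : 0 < ε) : |t| ≤ (t ^ 2 + ε ^ 2) ^ ((1:ℝ) / 2) := by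
  calc |t| = (t ^ 2) ^ ((1:ℝ) / 2) := by rw [rpow_sq_abs]; simp
  _ ≤ (t ^ 2 + ε ^ 2) ^ ((1:ℝ) / 2) := by
      apply Real.rpow_le_rpow (by positivity) (by nlinarith [sq_nonneg ε]) (by norm_num)

lemma abs_gee_le (hp : 1 ≤ p) (hε : 0 < ε) (hB : t ^ 2 + ε ^ 2 ≤ B) :
    |gee p ε t| ≤ B ^ ((p - 1) / 2) := by
  have hS : (0:ℝ) < t ^ 2 + ε ^ 2 := by positivity
  have hB0 : (0:ℝ) < B := lt_of_lt_of_le hS hB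
  have h1 : |gee p ε t| = |t| * (t ^ 2 + ε ^ 2) ^ ((p - 2) / 2) := by
    rw [gee, abs_mul, abs_of_nonneg (Real.rpow_nonneg hS.le _)]
  rw [h1]
  calc |t| * (t ^ 2 + ε ^ 2) ^ ((p - 2) / 2)
      ≤ (t ^ 2 + ε ^ 2) ^ ((1:ℝ)/2) * (t ^ 2 + ε ^ 2) ^ ((p - 2) / 2) := by
        apply mul_le_mul_of_nonneg_right (abs_le_rpow_half hε) (Real.rpow_nonneg hS.le _)
    _ = (t ^ 2 + ε ^ 2) ^ ((p - 1) / 2) := by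
        rw [← Real.rpow_add hS]; ring_nf
    _ ≤ B ^ ((p - 1) / 2) := Real.rpow_le_rpow hS.le hB (by linarith)

lemma mul_gee_nonneg (hε : 0 < ε) (t : ℝ) : 0 ≤ t * gee p ε t := by
  have : t * gee p ε t = t ^ 2 * (t ^ 2 + ε ^ 2) ^ ((p - 2) / 2) := by rw [gee]; ring
  rw [this]
  positivity

lemma mul_gee_le (hp : 1 ≤ p) (hε : 0 < ε) (hB : t ^ 2 + ε ^ 2 ≤ B) :
    t * gee p ε t ≤ B ^ (p / 2) := by
  have hS : (0:ℝ) < t ^ 2 + ε ^ 2 := by positivity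
  have hB0 : (0:ℝ) < B := lt_of_lt_of_le hS hB
  have h1 : t * gee p ε t = t ^ 2 * (t ^ 2 + ε ^ 2) ^ ((p - 2) / 2) := by rw [gee]; ring
  rw [h1]
  calc t ^ 2 * (t ^ 2 + ε ^ 2) ^ ((p - 2) / 2)
      ≤ (t ^ 2 + ε ^ 2) ^ (1:ℝ) * (t ^ 2 + ε ^ 2) ^ ((p - 2) / 2) := by
        apply mul_le_mul_of_nonneg_right _ (Real.rpow_nonneg hS.le _)
        rw [Real.rpow_one]; nlinarith [sq_nonneg ε]
    _ = (t ^ 2 + ε ^ 2) ^ (p / 2) := by rw [← Real.rpow_add hS]; ring_nf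
    _ ≤ B ^ (p / 2) := Real.rpow_le_rpow hS.le hB (by linarith)

lemma abs_Gee_le (hp : 1 ≤ p) (hε : 0 < ε) (hε1 : ε ≤ 1) (hB : t ^ 2 + ε ^ 2 ≤ B) :
    |Gee p ε t| ≤ B ^ (p / 2) + 1 := by
  have hS : (0:ℝ) < t ^ 2 + ε ^ 2 := by positivity
  have hB0 : (0:ℝ) < B := lt_of_lt_of_le hS hB
  have hεp : ε ^ p ≤ 1 := Real.rpow_le_one hε.le hε1 (by linarith)
  have h2 : |(t ^ 2 + ε ^ 2) ^ (p / 2) - ε ^ p| ≤ B ^ (p / 2) + 1 := by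
    rw [abs_sub_le_iff]
    constructor
    · have : (t ^ 2 + ε ^ 2) ^ (p / 2) ≤ B ^ (p / 2) :=
        Real.rpow_le_rpow hS.le hB (by linarith)
      have h0 : (0:ℝ) ≤ ε ^ p := Real.rpow_nonneg hε.le _
      linarith
    · have : (0:ℝ) ≤ (t ^ 2 + ε ^ 2) ^ (p / 2) := Real.rpow_nonneg hS.le _
      have hB1 : (0:ℝ) ≤ B ^ (p/2) := Real.rpow_nonneg hB0.le _
      linarith
  calc |Gee p ε t| = |(t ^ 2 + ε ^ 2) ^ (p / 2) - ε ^ p| / p := by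
        rw [Gee, abs_div, abs_of_pos (by linarith : (0:ℝ) < p)]
    _ ≤ |(t ^ 2 + ε ^ 2) ^ (p / 2) - ε ^ p| := div_le_self (abs_nonneg _) hp
    _ ≤ B ^ (p / 2) + 1 := h2

end GeeLemmas

section Limits
variable {p : ℝ} {e : ℕ → ℝ} (he : ∀ n, 0 < e n) (hlim : Tendsto e atTop (𝓝 0))
include he hlim

omit he in
lemma tendsto_sq_base (t : ℝ) : Tendsto (fun n => t ^ 2 + e n ^ 2) atTop (𝓝 (t ^ 2)) := by
  have := tendsto_const_nhds (x := t ^ 2) (f := atTop (α := ℕ)) |>.add (hlim.pow 2)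
  simpa using this

lemma tendsto_abs_gee (hp : 1 < p) (t : ℝ) :
    Tendsto (fun n => |gee p (e n) t|) atTop (𝓝 (|t| ^ (p - 1))) := by
  rcases eq_or_ne t 0 with rfl | ht
  · simp only [gee, zero_pow, abs_zero, zero_mul, ne_eq, OfNat.ofNat_ne_zero,
      not_false_eq_true]
    rw [Real.zero_rpow (by linarith : p - 1 ≠ 0)]
    simpa using tendsto_const_nhds
  · have ht2 : t ^ 2 ≠ 0 := pow_ne_zero 2 ht
    have h2 : ContinuousAt (fun x : ℝ => x ^ ((p - 2) / 2)) (t ^ 2) :=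
      Real.continuousAt_rpow_const _ _ (Or.inl ht2)
    have h3 := (h2.tendsto.comp (tendsto_sq_base hlim t)).const_mul |t|
    have heq : ∀ n, |t| * (fun x : ℝ => x ^ ((p - 2) / 2)) (t ^ 2 + e n ^ 2)
        = |gee p (e n) t| := by
      intro n
      have hS : (0:ℝ) < t ^ 2 + e n ^ 2 := by have := he n; positivity
      rw [gee, abs_mul, abs_of_nonneg (Real.rpow_nonneg hS.le _)]
    have hval : |t| * (fun x : ℝ => x ^ ((p - 2) / 2)) (t ^ 2) = |t| ^ (p - 1) := by
      simp only
      rw [rpow_sq_abs t (p-2), ← Real.rpow_one_add' (abs_nonneg t) (by ring_nf; linarith)]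
      ring_nf
    rw [← hval]
    exact h3.congr (fun n => heq n)

lemma tendsto_mul_gee (hp : 1 ≤ p) (t : ℝ) :
    Tendsto (fun n => t * gee p (e n) t) atTop (𝓝 (|t| ^ p)) := by
  rcases eq_or_ne t 0 with rfl | ht
  · simp only [gee, zero_mul]
    rw [abs_zero, Real.zero_rpow (by linarith : p ≠ 0)]
    exact tendsto_const_nhds
  · have ht2 : t ^ 2 ≠ 0 := pow_ne_zero 2 ht
    have h2 : ContinuousAt (fun x : ℝ => x ^ ((p - 2) / 2)) (t ^ 2) :=
      Real.continuousAt_rpow_const _ _ (Or.inl ht2)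
    have h3 := (h2.tendsto.comp (tendsto_sq_base hlim t)).const_mul (t ^ 2)
    have heq : ∀ n, t ^ 2 * (fun x : ℝ => x ^ ((p - 2) / 2)) (t ^ 2 + e n ^ 2)
        = t * gee p (e n) t := by intro n; rw [gee]; ring
    have hval : t ^ 2 * (fun x : ℝ => x ^ ((p - 2) / 2)) (t ^ 2) = |t| ^ p := by
      simp only
      have hpos : (0:ℝ) < t ^ 2 := by positivity
      rw [← Real.rpow_one_add' hpos.le (by ring_nf; nlinarith), show (1 + (p-2)/2) = p / 2 by ring,
        rpow_sq_abs t p]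
    rw [← hval]
    exact h3.congr (fun n => heq n)

lemma tendsto_Gee (hp : 1 ≤ p) (t : ℝ) :
    Tendsto (fun n => Gee p (e n) t) atTop (𝓝 (|t| ^ p / p)) := by
  have h2 : ContinuousAt (fun x : ℝ => x ^ (p / 2)) (t ^ 2) :=
    Real.continuousAt_rpow_const _ _ (Or.inr (by linarith))
  have h3 := h2.tendsto.comp (tendsto_sq_base hlim t)
  have h4 : Tendsto (fun n => e n ^ p) atTop (𝓝 0) := by
    have h5 : ContinuousAt (fun x : ℝ => x ^ p) 0 :=
      Real.continuousAt_rpow_const _ _ (Or.inr (by linarith))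
    have := h5.tendsto.comp hlim
    simpa [Real.zero_rpow (by linarith : p ≠ 0), Function.comp_def] using this
  have h6 := (h3.sub h4).div_const p
  simp only [Function.comp_def, sub_zero, rpow_sq_abs t p] at h6
  apply h6.congr
  intro n
  rw [Gee]

end Limits

set_option maxHeartbeats 1600000 in
/-- dissipativity of `𝓛 = div_x(a∇_x) + F·∇_x − V − D_s` on
`C_c^∞(ℝ^{1+N})` in `L^p(ℝ^{1+N})`: for every test function `u` and every `λ > 0`,
`‖λu − 𝓛u‖_p ≥ λ‖u‖_p`. -/
theorem statement3 (N : ℕ) (hN : 1 ≤ N) (p : ℝ) (hp1 : 1 ≤ p)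
    (a : Pt N → Matrix (Fin N) (Fin N) ℝ)
    -- (A1): a_{ij} ∈ C_b^1(ℝ^{1+N}), symmetric, uniformly elliptic
    (hareg : ∀ i j, ContDiff ℝ 1 fun q => a q i j)
    (habd : ∃ C : ℝ, ∀ (q : Pt N) (i j : Fin N),
      |a q i j| ≤ C ∧ ‖fderiv ℝ (fun r => a r i j) q‖ ≤ C)
    (hasym : ∀ (q : Pt N) (i j : Fin N), a q i j = a q j i)
    (η₀ : ℝ) (hη₀ : 0 < η₀)
    (haell : ∀ (q : Pt N) (ξ : Fin N → ℝ),
      η₀ * enorm2 ξ ^ 2 ≤ ∑ i, (a q).mulVec ξ i * ξ i)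
    -- F ∈ C^{0,1}(ℝ^{1+N}, ℝ^N): continuous, with continuous spatial gradient
    (F : Pt N → Fin N → ℝ)
    (hFcont : Continuous F)
    (hFdiff : ∀ (i : Fin N) (s : ℝ), Differentiable ℝ fun x => F (s, x) i)
    (hFgradcont : ∀ i j : Fin N,
      Continuous fun q : Pt N => fderiv ℝ (fun x => F (q.1, x) i) q.2 (Pi.single j 1))
    -- V ∈ L^p_loc(ℝ^{1+N})
    (V : Pt N → ℝ)
    (hVloc : ∀ K : Set (Pt N), IsCompact K →
      MemLp V (ENNReal.ofReal p) (volume.restrict K))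
    -- V + (1/p) div_x F ≥ 0 almost everywhere
    (hdiss : ∀ᵐ q : Pt N, 0 ≤ V q + (1 / p) * divXs F q) :
    ∀ u : Pt N → ℝ, ContDiff ℝ (⊤ : ℕ∞) u → HasCompactSupport u →
      ∀ lam : ℝ, 0 < lam →
        ENNReal.ofReal lam * eLpNorm u (ENNReal.ofReal p) volume ≤
          eLpNorm
            (fun q => lam * u q -
              (divAGrad a u q + (∑ j, F q j * pX j u q) - V q * u q - pT u q))
            (ENNReal.ofReal p) volume := by
  intro u hu hcu lam hlam
  classical
  have hp0 : (0:ℝ) < p := lt_of_lt_of_le one_pos hp1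
  set p' : ℝ≥0∞ := ENNReal.ofReal p with hp'def
  set w : Pt N → ℝ := fun q => lam * u q -
      (divAGrad a u q + (∑ j, F q j * pX j u q) - V q * u q - pT u q) with hwdef
  -- smoothness bookkeeping
  have hu1 : ContDiff ℝ 1 u := hu.of_le (by simp)
  have huc : Continuous u := hu1.continuous
  have hud : Differentiable ℝ u := hu1.differentiable one_ne_zero
  have hfd : ContDiff ℝ 1 (fderiv ℝ u) := (hu.of_le (WithTop.coe_le_coe.2 le_top) : ContDiff ℝ 2 u).fderiv_right
    (by norm_num)
  have hpXu : ∀ j, ContDiff ℝ 1 (pX j u) := fun j => by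
    unfold pX; exact hfd.clm_apply contDiff_const
  have hpTu : ContDiff ℝ 1 (pT u) := by
    unfold pT; exact hfd.clm_apply contDiff_const
  -- support bookkeeping
  set K : Set (Pt N) := tsupport u with hKdef
  have hK : IsCompact K := hcu
  have hKm : MeasurableSet K := (isClosed_tsupport u).measurableSet
  have hKfin : volume K < ⊤ := hK.measure_lt_top
  haveI : IsFiniteMeasure (volume.restrict K) :=
    ⟨by rwa [Measure.restrict_apply_univ]⟩
  have huK : ∀ q, q ∉ K → u q = 0 := fun q hq => image_eq_zero_of_notMem_tsupport hq
  -- uniform bound on u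
  obtain ⟨M, hM0, hM⟩ : ∃ M : ℝ, 0 ≤ M ∧ ∀ q, |u q| ≤ M := by
    obtain ⟨C, hC⟩ := hK.exists_bound_of_continuousOn huc.continuousOn
    refine ⟨max C 0, le_max_right _ _, fun q => ?_⟩
    by_cases hq : q ∈ K
    · exact le_trans (by simpa using hC q hq) (le_max_left _ _)
    · simp [huK q hq, le_max_right C 0]
  set B : ℝ := M ^ 2 + 1 with hBdef
  have hB1 : (1:ℝ) ≤ B := by nlinarith
  have hB0 : (0:ℝ) < B := by linarith
  have hBb : ∀ {ε : ℝ}, 0 < ε → ε ≤ 1 → ∀ q : Pt N, u q ^ 2 + ε ^ 2 ≤ B := by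
    intro ε hε hε1 q
    have h1 : u q ^ 2 ≤ M ^ 2 := by
      have := hM q; nlinarith [abs_nonneg (u q), sq_abs (u q)]
    have h2 : ε ^ 2 ≤ 1 := by nlinarith
    simp only [hBdef]; linarith
  -- continuity of coefficient functions
  have hfi : ∀ i : Fin N, ContDiff ℝ 1 (fun r => ∑ j, a r i j * pX j u r) :=
    fun i => ContDiff.sum fun j _ => (hareg i j).mul (hpXu j)
  have hcontA : Continuous (divAGrad a u) := by
    unfold divAGrad pX
    exact continuous_finset_sum _ fun i _ => cont_fderiv_apply (hfi i) _
  have hcontF1 : Continuous fun q => ∑ j, F q j * pX j u q :=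
    continuous_finset_sum _ fun j _ =>
      ((continuous_apply j).comp hFcont).mul (hpXu j).continuous
  have hcontdivF : Continuous (divXs F) := by
    unfold divXs
    exact continuous_finset_sum _ fun j _ => hFgradcont j j
  -- integrability of V against compactly supported continuous functions
  have hVK : Integrable V (volume.restrict K) := by
    have h1 := (hVloc K hK).mono_exponent (p := 1)
      (by simpa [hp'def] using ENNReal.one_le_ofReal.2 hp1)
    exact memLp_one_iff_integrable.1 h1
  have hVmul : ∀ h : Pt N → ℝ, Continuous h → (∀ q, q ∉ K → h q = 0) →
      Integrable (fun q => V q * h q) volume := by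
    intro h hh h0
    have hhs : HasCompactSupport h := HasCompactSupport.intro hK h0
    obtain ⟨C, hC⟩ := hK.exists_bound_of_continuousOn hh.continuousOn
    have hbd : ∃ C', ∀ q, ‖h q‖ ≤ C' := by
      refine ⟨max C 0, fun q => ?_⟩
      by_cases hq : q ∈ K
      · exact le_trans (hC q hq) (le_max_left _ _)
      · simp [h0 q hq, le_max_right C 0]
    have heq : (fun q => V q * h q) = K.indicator (fun q => V q * h q) := by
      funext q
      by_cases hq : q ∈ K
      · rw [Set.indicator_of_mem hq]
      · rw [Set.indicator_of_notMem hq, h0 q hq, mul_zero]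
    rw [heq, integrable_indicator_iff hKm]
    have := hVK.bdd_mul (f := h) hh.aestronglyMeasurable.restrict (ae_of_all _ hbd.choose_spec)
    exact this.congr (by filter_upwards with q; ring)
  -- a.e. strong measurability of w
  have hVu_asm : AEStronglyMeasurable (fun q => V q * u q) volume := by
    have heq : (fun q => V q * u q) = K.indicator (fun q => V q * u q) := by
      funext q
      by_cases hq : q ∈ K
      · rw [Set.indicator_of_mem hq]
      · rw [Set.indicator_of_notMem hq, huK q hq, mul_zero]
    rw [heq]
    exact (aestronglyMeasurable_indicator_iff hKm).2
      ((hVloc K hK).aestronglyMeasurable.mul huc.aestronglyMeasurable.restrict)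
  have hwm : AEStronglyMeasurable w volume := by
    rw [hwdef]
    exact ((continuous_const.mul huc).aestronglyMeasurable).sub
      (((hcontA.aestronglyMeasurable.add hcontF1.aestronglyMeasurable).sub hVu_asm).sub
        hpTu.continuous.aestronglyMeasurable)
  -- the key inequality, for every 0 < ε ≤ 1
  have key : ∀ ε : ℝ, 0 < ε → ε ≤ 1 →
      lam * (∫ q : Pt N, u q * gee p ε (u q)) +
        (∫ q : Pt N, divXs F q * (Gee p ε (u q) - (1/p) * (u q * gee p ε (u q)))) ≤
      ∫ q : Pt N, |w q * gee p ε (u q)| := by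
    intro ε hε hε1
    set gU : Pt N → ℝ := fun q => gee p ε (u q) with hgUdef
    set GU : Pt N → ℝ := fun q => Gee p ε (u q) with hGUdef
    have hgC : Continuous gU := (continuous_gee hε).comp huc
    have hGC : Continuous GU := (continuous_Gee hε).comp huc
    have hgs : HasCompactSupport gU := hcu.comp_left (gee_zero hε)
    have hGs : HasCompactSupport GU := hcu.comp_left (Gee_zero hε)
    have hgc1 : ContDiff ℝ 1 gU := (contDiff_gee hε).comp hu1
    have hGc1 : ContDiff ℝ 1 GU := (contDiff_Gee hε).comp hu1
    have hgF : ∀ q : Pt N, HasFDerivAt gU (gee' p ε (u q) • fderiv ℝ u q) q :=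
      fun q => (hasDerivAt_gee hε (u q)).comp_hasFDerivAt q (hud q).hasFDerivAt
    have hGF : ∀ q : Pt N, HasFDerivAt GU (gee p ε (u q) • fderiv ℝ u q) q :=
      fun q => (hasDerivAt_Gee hp1 hε (u q)).comp_hasFDerivAt q (hud q).hasFDerivAt
    have hgfder : ∀ (q : Pt N) (v : Pt N),
        fderiv ℝ gU q v = gee' p ε (u q) * fderiv ℝ u q v := fun q v => by
      rw [(hgF q).fderiv]; simp
    have hGfder : ∀ (q : Pt N) (v : Pt N),
        fderiv ℝ GU q v = gee p ε (u q) * fderiv ℝ u q v := fun q v => by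
      rw [(hGF q).fderiv]; simp
    have hgdiff : Differentiable ℝ gU := fun q => (hgF q).differentiableAt
    have hGdiff : Differentiable ℝ GU := fun q => (hGF q).differentiableAt
    have hgK : ∀ q, q ∉ K → gU q = 0 := fun q hq => by
      simp only [hgUdef, huK q hq, gee_zero hε]
    -- (A) time-derivative term
    have hIT : ∫ q : Pt N, pT u q * gU q = 0 := by
      have h0 := integral_fderiv_apply_eq_zero hGc1 hGs ((1:ℝ), (0 : Fin N → ℝ))
      rw [← h0]
      congr 1; funext q
      rw [hGfder q _]
      simp only [hgUdef, pT]
      ring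
    -- (B) drift term
    have hIBj : ∀ j : Fin N,
        ∫ q : Pt N, F q j * (gU q * pX j u q)
          = - ∫ q : Pt N, (fderiv ℝ (fun x => F (q.1, x) j) q.2 (Pi.single j 1)) * GU q := by
      intro j
      set v : Pt N := ((0:ℝ), Pi.single j (1:ℝ)) with hvdef
      set Fj : Pt N → ℝ := fun q => F q j with hFjdef
      set Fj' : Pt N → ℝ := fun q => fderiv ℝ (fun x => F (q.1, x) j) q.2 (Pi.single j 1)
        with hFj'def
      have hFjc : Continuous Fj := (continuous_apply j).comp hFcont
      have hFj'c : Continuous Fj' := hFgradcont j j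
      have hlineF : ∀ q : Pt N, HasLineDerivAt ℝ Fj (Fj' q) q v := by
        intro q
        have h1 : HasFDerivAt (fun y => F (q.1, y) j)
            (fderiv ℝ (fun y => F (q.1, y) j) q.2) q.2 := (hFdiff j q.1 q.2).hasFDerivAt
        have h2 : HasDerivAt (fun t : ℝ => q.2 + t • (Pi.single j (1:ℝ) : Fin N → ℝ))
            ((Pi.single j (1:ℝ) : Fin N → ℝ)) 0 := by
          simpa using ((hasDerivAt_id (0:ℝ)).smul_const ((Pi.single j (1:ℝ) : Fin N → ℝ))).const_add q.2
        have e0 : q.2 + (0:ℝ) • (Pi.single j (1:ℝ) : Fin N → ℝ) = q.2 := by simp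
        have h1' : HasFDerivAt (fun y => F (q.1, y) j)
            (fderiv ℝ (fun y => F (q.1, y) j) q.2)
            (q.2 + (0:ℝ) • (Pi.single j (1:ℝ) : Fin N → ℝ)) := by
          rw [e0]; exact h1
        have h3 := h1'.comp_hasDerivAt (0:ℝ) h2
        have h4 : (fun t : ℝ => Fj (q + t • v))
            = fun t : ℝ => F (q.1, q.2 + t • (Pi.single j (1:ℝ) : Fin N → ℝ)) j := by
          funext t
          have : q + t • v = (q.1, q.2 + t • (Pi.single j (1:ℝ) : Fin N → ℝ)) := by
            apply Prod.ext <;> simp [hvdef]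
          rw [hFjdef]; simp only [this]
        show HasDerivAt (fun t : ℝ => Fj (q + t • v)) (Fj' q) 0
        rw [h4]
        exact h3
      have hlineG : ∀ q : Pt N, HasLineDerivAt ℝ GU (gU q * pX j u q) q v := by
        intro q
        have := (hGF q).hasLineDerivAt v
        simpa [pX, hgUdef] using this
      have k1 : Integrable (fun q => Fj' q * GU q) volume :=
        (hFj'c.mul hGC).integrable_of_hasCompactSupport hGs.mul_left
      have k2 : Integrable (fun q => Fj q * (gU q * pX j u q)) volume :=
        (hFjc.mul (hgC.mul (hpXu j).continuous)).integrable_of_hasCompactSupport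
          (hgs.mul_right).mul_left
      have k3 : Integrable (fun q => Fj q * GU q) volume :=
        (hFjc.mul hGC).integrable_of_hasCompactSupport hGs.mul_left
      have key := integral_bilinear_hasLineDerivAt_right_eq_neg_left_of_integrable
        (B := ContinuousLinearMap.mul ℝ ℝ) (μ := volume)
        (f := Fj) (f' := Fj') (g := GU) (g' := fun q => gU q * pX j u q) (v := v)
        (by simpa using k1) (by simpa using k2) (by simpa using k3) (fun q _ => hlineF q) (fun q _ => hlineG q)
      simpa using key
    have hIF : ∫ q : Pt N, (∑ j, F q j * pX j u q) * gU q
        = - ∫ q : Pt N, divXs F q * GU q := by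
      have k2' : ∀ j : Fin N, Integrable (fun q => F q j * (gU q * pX j u q)) volume :=
        fun j => (((continuous_apply j).comp hFcont).mul
          (hgC.mul (hpXu j).continuous)).integrable_of_hasCompactSupport
          (hgs.mul_right).mul_left
      have k1' : ∀ j : Fin N, Integrable
          (fun q => (fderiv ℝ (fun x => F (q.1, x) j) q.2 (Pi.single j 1)) * GU q) volume :=
        fun j => ((hFgradcont j j).mul hGC).integrable_of_hasCompactSupport hGs.mul_left
      have hsum : (fun q : Pt N => (∑ j, F q j * pX j u q) * gU q)
          = fun q : Pt N => ∑ j, F q j * (gU q * pX j u q) := by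
        funext q; rw [Finset.sum_mul]; apply Finset.sum_congr rfl; intros; ring
      rw [hsum, integral_finset_sum _ (fun j _ => k2' j)]
      calc ∑ j : Fin N, ∫ q : Pt N, F q j * (gU q * pX j u q)
          = ∑ j : Fin N, - ∫ q : Pt N,
              (fderiv ℝ (fun x => F (q.1, x) j) q.2 (Pi.single j 1)) * GU q :=
            Finset.sum_congr rfl (fun j _ => hIBj j)
        _ = - ∑ j : Fin N, ∫ q : Pt N,
              (fderiv ℝ (fun x => F (q.1, x) j) q.2 (Pi.single j 1)) * GU q := by
            rw [Finset.sum_neg_distrib]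
        _ = - ∫ q : Pt N, ∑ j : Fin N,
              (fderiv ℝ (fun x => F (q.1, x) j) q.2 (Pi.single j 1)) * GU q := by
            rw [integral_finset_sum _ (fun j _ => k1' j)]
        _ = - ∫ q : Pt N, divXs F q * GU q := by
            congr 1
            apply integral_congr_ae
            filter_upwards with q
            simp only [divXs]
            rw [Finset.sum_mul]
    -- (C) elliptic term
    have hpXs : ∀ vv : Pt N, HasCompactSupport (fun q => fderiv ℝ u q vv) :=
      fun vv => (hcu.fderiv (𝕜 := ℝ)).comp_left (g := fun L : Pt N →L[ℝ] ℝ => L vv) rfl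
    have hgUfs : ∀ vv : Pt N, HasCompactSupport (fun q => fderiv ℝ gU q vv) :=
      fun vv => (hgs.fderiv (𝕜 := ℝ)).comp_left (g := fun L : Pt N →L[ℝ] ℝ => L vv) rfl
    have hIA : ∫ q : Pt N, divAGrad a u q * gU q ≤ 0 := by
      have hAyz : ∀ i : Fin N,
          ∫ q : Pt N, pX i (fun r => ∑ j, a r i j * pX j u r) q * gU q
            = - ∫ q : Pt N, (∑ j, a q i j * pX j u q) * (gee' p ε (u q) * pX i u q) := by
        intro i
        set v : Pt N := ((0:ℝ), Pi.single i (1:ℝ)) with hvdef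
        have int1 : Integrable
            (fun q => fderiv ℝ (fun r => ∑ j, a r i j * pX j u r) q v * gU q) volume :=
          ((cont_fderiv_apply (hfi i) v).mul hgC).integrable_of_hasCompactSupport
            hgs.mul_left
        have int2 : Integrable
            (fun q => (∑ j, a q i j * pX j u q) * fderiv ℝ gU q v) volume :=
          (((hfi i).continuous).mul (cont_fderiv_apply hgc1 v)).integrable_of_hasCompactSupport
            (hgUfs v).mul_left
        have int3 : Integrable (fun q => (∑ j, a q i j * pX j u q) * gU q) volume :=
          (((hfi i).continuous).mul hgC).integrable_of_hasCompactSupport hgs.mul_left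
        have key := integral_mul_fderiv_eq_neg_fderiv_mul_of_integrable
          (f := fun r => ∑ j, a r i j * pX j u r) (g := gU) (v := v) (μ := volume)
          int1 int2 int3 (fun x _ => (hfi i).differentiable one_ne_zero x) (fun x _ => hgdiff x)
        have key2 : ∫ q : Pt N, fderiv ℝ (fun r => ∑ j, a r i j * pX j u r) q v * gU q
            = - ∫ q : Pt N, (∑ j, a q i j * pX j u q) * fderiv ℝ gU q v := by
          linarith [key]
        have e : (fun q : Pt N => (∑ j, a q i j * pX j u q) * fderiv ℝ gU q v)
            = fun q : Pt N => (∑ j, a q i j * pX j u q) * (gee' p ε (u q) * pX i u q) := by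
          funext q; rw [hgfder, hvdef]; rfl
        rw [← e]
        exact key2
      have hsum : (fun q : Pt N => divAGrad a u q * gU q)
          = fun q : Pt N => ∑ i, pX i (fun r => ∑ j, a r i j * pX j u r) q * gU q := by
        funext q; simp only [divAGrad]; rw [Finset.sum_mul]
      have intg : ∀ i : Fin N, Integrable
          (fun q => pX i (fun r => ∑ j, a r i j * pX j u r) q * gU q) volume :=
        fun i => ((cont_fderiv_apply (hfi i) _).mul hgC).integrable_of_hasCompactSupport
          hgs.mul_left
      have intX : ∀ i : Fin N, Integrable
          (fun q => (∑ j, a q i j * pX j u q) * (gee' p ε (u q) * pX i u q)) volume := by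
        intro i
        apply Continuous.integrable_of_hasCompactSupport
        · exact ((hfi i).continuous).mul
            (((continuous_gee' hε).comp huc).mul (hpXu i).continuous)
        · exact ((hpXs ((0:ℝ), Pi.single i (1:ℝ))).mul_left).mul_left
      rw [hsum, integral_finset_sum _ (fun i _ => intg i)]
      have hcalc : ∑ i : Fin N, ∫ q : Pt N, pX i (fun r => ∑ j, a r i j * pX j u r) q * gU q
          = - ∫ q : Pt N, ∑ i, (∑ j, a q i j * pX j u q) * (gee' p ε (u q) * pX i u q) := by
        calc ∑ i : Fin N, ∫ q : Pt N, pX i (fun r => ∑ j, a r i j * pX j u r) q * gU q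
            = ∑ i : Fin N, - ∫ q : Pt N,
                (∑ j, a q i j * pX j u q) * (gee' p ε (u q) * pX i u q) :=
              Finset.sum_congr rfl (fun i _ => hAyz i)
          _ = - ∑ i : Fin N, ∫ q : Pt N,
                (∑ j, a q i j * pX j u q) * (gee' p ε (u q) * pX i u q) := by
              rw [Finset.sum_neg_distrib]
          _ = - ∫ q : Pt N, ∑ i, (∑ j, a q i j * pX j u q) * (gee' p ε (u q) * pX i u q) := by
              rw [integral_finset_sum _ (fun i _ => intX i)]
      rw [hcalc]
      have hQ : ∀ q : Pt N,
          0 ≤ ∑ i, (∑ j, a q i j * pX j u q) * (gee' p ε (u q) * pX i u q) := by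
        intro q
        have hmv : ∀ i, (a q).mulVec (fun j => pX j u q) i = ∑ j, a q i j * pX j u q :=
          fun i => by simp [Matrix.mulVec, dotProduct]
        have h1 : 0 ≤ ∑ i, (a q).mulVec (fun j => pX j u q) i * pX i u q := by
          refine le_trans ?_ (haell q (fun j => pX j u q))
          have : 0 ≤ enorm2 (fun j => pX j u q) ^ 2 := sq_nonneg _
          positivity
        have h2 : ∑ i, (∑ j, a q i j * pX j u q) * (gee' p ε (u q) * pX i u q)
            = gee' p ε (u q) * ∑ i, (a q).mulVec (fun j => pX j u q) i * pX i u q := by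
          rw [Finset.mul_sum]; apply Finset.sum_congr rfl
          intro i _; rw [hmv i]; ring
        rw [h2]
        exact mul_nonneg (gee'_nonneg hp1 hε _) h1
      have hint0 : (0:ℝ) ≤ ∫ q : Pt N, ∑ i, (∑ j, a q i j * pX j u q)
          * (gee' p ε (u q) * pX i u q) := integral_nonneg hQ
      linarith
    -- integrability facts
    have i1 : Integrable (fun q => u q * gU q) volume :=
      (huc.mul hgC).integrable_of_hasCompactSupport hgs.mul_left
    have i2 : Integrable (fun q => divAGrad a u q * gU q) volume :=
      (hcontA.mul hgC).integrable_of_hasCompactSupport hgs.mul_left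
    have i3 : Integrable (fun q => (∑ j, F q j * pX j u q) * gU q) volume :=
      (hcontF1.mul hgC).integrable_of_hasCompactSupport hgs.mul_left
    have i4 : Integrable (fun q => V q * (u q * gU q)) volume :=
      hVmul _ (huc.mul hgC) (fun q hq => by rw [huK q hq, zero_mul])
    have i5 : Integrable (fun q => pT u q * gU q) volume :=
      (hpTu.continuous.mul hgC).integrable_of_hasCompactSupport hgs.mul_left
    have i6 : Integrable (fun q => divXs F q * (u q * gU q)) volume :=
      (hcontdivF.mul (huc.mul hgC)).integrable_of_hasCompactSupport
        (hgs.mul_left).mul_left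
    have i7 : Integrable (fun q => divXs F q * GU q) volume :=
      (hcontdivF.mul hGC).integrable_of_hasCompactSupport hGs.mul_left
    have iwg : Integrable (fun q => w q * gU q) volume := by
      have heq : (fun q => w q * gU q) = fun q =>
          lam * (u q * gU q) - divAGrad a u q * gU q
            - (∑ j, F q j * pX j u q) * gU q + V q * (u q * gU q) + pT u q * gU q := by
        funext q; simp only [hwdef]; ring
      rw [heq]
      exact ((((i1.const_mul lam).sub i2).sub i3).add i4).add i5
    -- (F) decomposition of ∫ w g
    have hdecomp : ∫ q : Pt N, w q * gU q
        = lam * (∫ q : Pt N, u q * gU q) - (∫ q : Pt N, divAGrad a u q * gU q)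
          - (∫ q : Pt N, (∑ j, F q j * pX j u q) * gU q)
          + (∫ q : Pt N, V q * (u q * gU q)) + (∫ q : Pt N, pT u q * gU q) := by
      have heq : (fun q => w q * gU q) = fun q =>
          lam * (u q * gU q) - divAGrad a u q * gU q
            - (∑ j, F q j * pX j u q) * gU q + V q * (u q * gU q) + pT u q * gU q := by
        funext q; simp only [hwdef]; ring
      have j1 : Integrable (fun q => lam * (u q * gU q)) volume := i1.const_mul lam
      have j2 : Integrable (fun q => lam * (u q * gU q) - divAGrad a u q * gU q) volume :=
        j1.sub i2
      have j3 : Integrable (fun q => lam * (u q * gU q) - divAGrad a u q * gU q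
          - (∑ j, F q j * pX j u q) * gU q) volume := j2.sub i3
      have j4 : Integrable (fun q => lam * (u q * gU q) - divAGrad a u q * gU q
          - (∑ j, F q j * pX j u q) * gU q + V q * (u q * gU q)) volume := j3.add i4
      rw [heq, integral_add j4 i5, integral_add j3 i4, integral_sub j2 i3,
        integral_sub j1 i2, integral_const_mul]
    -- (D) sign term
    have hsign : 0 ≤ ∫ q : Pt N, (V q + (1/p) * divXs F q) * (u q * gU q) := by
      apply integral_nonneg_of_ae
      filter_upwards [hdiss] with q hq
      exact mul_nonneg hq (mul_gee_nonneg hε (u q))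
    -- (E) splitting
    have hsplit : (∫ q : Pt N, V q * (u q * gU q)) + (∫ q : Pt N, divXs F q * GU q)
        = (∫ q : Pt N, (V q + (1/p) * divXs F q) * (u q * gU q))
          + (∫ q : Pt N, divXs F q * (GU q - (1/p) * (u q * gU q))) := by
      have e1 : ∫ q : Pt N, (V q + (1/p) * divXs F q) * (u q * gU q)
          = (∫ q : Pt N, V q * (u q * gU q))
            + (1/p) * ∫ q : Pt N, divXs F q * (u q * gU q) := by
        rw [← integral_const_mul, ← integral_add i4 (i6.const_mul _)]
        congr 1; funext q; ring
      have e2 : ∫ q : Pt N, divXs F q * (GU q - (1/p) * (u q * gU q))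
          = (∫ q : Pt N, divXs F q * GU q)
            - (1/p) * ∫ q : Pt N, divXs F q * (u q * gU q) := by
        rw [← integral_const_mul, ← integral_sub i7 (i6.const_mul _)]
        congr 1; funext q; ring
      rw [e1, e2]; ring
    -- put everything together
    have hlow : lam * (∫ q : Pt N, u q * gU q)
        + (∫ q : Pt N, divXs F q * (GU q - (1/p) * (u q * gU q)))
        ≤ ∫ q : Pt N, w q * gU q := by
      rw [hdecomp, hIT, hIF]
      linarith [hIA, hsplit, hsign]
    calc lam * (∫ q : Pt N, u q * gee p ε (u q))
        + (∫ q : Pt N, divXs F q * (Gee p ε (u q) - (1/p) * (u q * gee p ε (u q))))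
        ≤ ∫ q : Pt N, w q * gU q := hlow
      _ ≤ ∫ q : Pt N, |w q * gU q| :=
          integral_mono iwg iwg.abs (fun q => le_abs_self _)
  -- trivial case: infinite RHS
  by_cases hwtop : eLpNorm w p' volume = ⊤
  · rw [hwtop]; exact le_top
  have hwmem : MemLp w p' volume := ⟨hwm, lt_top_iff_ne_top.2 hwtop⟩
  have hwK : Integrable w (volume.restrict K) := by
    have h1 : MemLp w p' (volume.restrict K) := hwmem.restrict K
    exact memLp_one_iff_integrable.1 (h1.mono_exponent
      (by simpa [hp'def] using ENNReal.one_le_ofReal.2 hp1))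
  -- the sequence εₙ = 1/(n+1)
  set e : ℕ → ℝ := fun n => ((n:ℝ) + 1)⁻¹ with hedef
  have he : ∀ n, 0 < e n := fun n => by rw [hedef]; positivity
  have he1 : ∀ n, e n ≤ 1 := fun n => by
    rw [hedef]
    rw [inv_le_one_iff₀]
    right
    have : (0:ℝ) ≤ (n:ℝ) := Nat.cast_nonneg n
    linarith
  have hlime : Tendsto e atTop (𝓝 0) := by
    have := tendsto_one_div_add_atTop_nhds_zero_nat (𝕜 := ℝ)
    simpa [hedef, one_div] using this
  have husq : ∀ q : Pt N, u q ^ 2 ≤ B := fun q => by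
    have h := hM q
    have : u q ^ 2 ≤ M ^ 2 := by nlinarith [abs_nonneg (u q), sq_abs (u q)]
    simp only [hBdef]; linarith
  set A : ℝ := ∫ q : Pt N, |u q| ^ p with hAdef
  have hAint : Integrable (fun q : Pt N => |u q| ^ p) volume := by
    apply Continuous.integrable_of_hasCompactSupport
    · exact (huc.abs).rpow_const (fun q => Or.inr hp0.le)
    · exact hcu.comp_left (g := fun t => |t| ^ p) (by simp [Real.zero_rpow hp0.ne'])
  have hA0 : 0 ≤ A := integral_nonneg fun q => Real.rpow_nonneg (abs_nonneg _) _
  -- limit of ∫ u gε(u)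
  have T1 : Tendsto (fun n => ∫ q : Pt N, u q * gee p (e n) (u q)) atTop (𝓝 A) := by
    apply tendsto_integral_of_dominated_convergence (K.indicator fun _ => B ^ (p/2))
    · intro n
      exact (huc.mul ((continuous_gee (he n)).comp huc)).aestronglyMeasurable
    · rw [integrable_indicator_iff hKm]
      exact integrableOn_const hKfin.ne
    · intro n
      filter_upwards with q
      by_cases hq : q ∈ K
      · rw [Set.indicator_of_mem hq, Real.norm_eq_abs,
          abs_of_nonneg (mul_gee_nonneg (he n) (u q))]
        exact mul_gee_le hp1 (he n) (hBb (he n) (he1 n) q)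
      · rw [Set.indicator_of_notMem hq, huK q hq]
        simp [gee_zero (he n)]
    · filter_upwards with q
      exact tendsto_mul_gee he hlime hp1 (u q)
  -- limit of the remainder term
  have T2 : Tendsto (fun n => ∫ q : Pt N, divXs F q *
      (Gee p (e n) (u q) - (1/p) * (u q * gee p (e n) (u q)))) atTop (𝓝 0) := by
    obtain ⟨CF, hCF0, hCF⟩ : ∃ C : ℝ, 0 ≤ C ∧ ∀ q ∈ K, |divXs F q| ≤ C := by
      obtain ⟨C, hC⟩ := hK.exists_bound_of_continuousOn hcontdivF.continuousOn
      exact ⟨max C 0, le_max_right _ _, fun q hq =>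
        le_trans (by simpa using hC q hq) (le_max_left _ _)⟩
    have h0 : (𝓝 (0:ℝ)) = 𝓝 (∫ _q : Pt N, (0:ℝ)) := by simp
    rw [h0]
    apply tendsto_integral_of_dominated_convergence
      (K.indicator fun _ => CF * ((B ^ (p/2) + 1) + B ^ (p/2)))
    · intro n
      exact (hcontdivF.mul (((continuous_Gee (he n)).comp huc).sub
        (continuous_const.mul (huc.mul
          ((continuous_gee (he n)).comp huc))))).aestronglyMeasurable
    · rw [integrable_indicator_iff hKm]
      exact integrableOn_const hKfin.ne
    · intro n
      filter_upwards with q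
      by_cases hq : q ∈ K
      · rw [Set.indicator_of_mem hq, Real.norm_eq_abs, abs_mul]
        have g1 := abs_Gee_le (t := u q) hp1 (he n) (he1 n) (hBb (he n) (he1 n) q)
        have g2 : |(1/p) * (u q * gee p (e n) (u q))| ≤ B ^ (p/2) := by
          rw [abs_mul, abs_of_nonneg (mul_gee_nonneg (he n) (u q))]
          have h3 := mul_gee_le hp1 (he n) (hBb (he n) (he1 n) q)
          have h4 : |1/p| ≤ 1 := by
            rw [abs_of_pos (by positivity)]
            rw [div_le_one hp0]; exact hp1
          calc |1/p| * (u q * gee p (e n) (u q)) ≤ 1 * (B ^ (p/2)) :=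
                mul_le_mul h4 h3 (mul_gee_nonneg (he n) (u q)) one_pos.le
            _ = B ^ (p/2) := one_mul _
        have h1 : |Gee p (e n) (u q) - (1/p) * (u q * gee p (e n) (u q))|
            ≤ (B ^ (p/2) + 1) + B ^ (p/2) :=
          le_trans (abs_sub _ _) (add_le_add g1 g2)
        exact mul_le_mul (hCF q hq) h1 (abs_nonneg _) hCF0
      · rw [Set.indicator_of_notMem hq, huK q hq]
        simp [gee_zero (he n), Gee_zero (he n)]
    · filter_upwards with q
      have hten := ((tendsto_Gee he hlime hp1 (u q)).sub
        ((tendsto_mul_gee he hlime hp1 (u q)).const_mul (1/p))).const_mul (divXs F q)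
      have hval : divXs F q * (|u q| ^ p / p - 1/p * (|u q| ^ p)) = 0 := by ring
      rw [show (0:ℝ) = divXs F q * (|u q| ^ p / p - 1/p * (|u q| ^ p)) from hval.symm]
      exact hten
  -- split on p = 1 or p > 1
  rcases eq_or_lt_of_le hp1 with hpe | hpl
  · -- case p = 1
    subst hpe
    have hp'1 : p' = 1 := by rw [hp'def, ENNReal.ofReal_one]
    have hDn : ∀ n, ∫ q : Pt N, |w q * gee 1 (e n) (u q)| ≤ ∫ q in K, |w q| := by
      intro n
      have hind : (fun q : Pt N => |w q * gee 1 (e n) (u q)|)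
          = K.indicator (fun q => |w q * gee 1 (e n) (u q)|) := by
        funext q
        by_cases hq : q ∈ K
        · rw [Set.indicator_of_mem hq]
        · rw [Set.indicator_of_notMem hq, huK q hq, gee_zero (he n)]
          simp
      rw [hind, integral_indicator hKm]
      apply integral_mono_of_nonneg
      · filter_upwards with q; positivity
      · exact hwK.abs
      · filter_upwards with q
        rw [abs_mul]
        have hg1 : |gee 1 (e n) (u q)| ≤ 1 := by
          have := abs_gee_le (t := u q) le_rfl (he n) (le_refl (u q ^ 2 + e n ^ 2))
          simpa [Real.rpow_zero] using this
        calc |w q| * |gee 1 (e n) (u q)| ≤ |w q| * 1 :=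
              mul_le_mul_of_nonneg_left hg1 (abs_nonneg _)
          _ = |w q| := mul_one _
    have hlimle : lam * A ≤ ∫ q in K, |w q| := by
      have hlim1 : Tendsto (fun n => lam * (∫ q : Pt N, u q * gee 1 (e n) (u q))
          + (∫ q : Pt N, divXs F q *
            (Gee 1 (e n) (u q) - (1/1) * (u q * gee 1 (e n) (u q)))))
          atTop (𝓝 (lam * A + 0)) := (T1.const_mul lam).add T2
      rw [← add_zero (lam * A)]
      apply le_of_tendsto hlim1
      filter_upwards with n
      exact le_trans (key (e n) (he n) (he1 n)) (hDn n)
    have hwint : Integrable w volume := memLp_one_iff_integrable.1 (hp'1 ▸ hwmem)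
    have hKle : ∫ q in K, |w q| ≤ ∫ q : Pt N, |w q| :=
      setIntegral_le_integral hwint.abs (by filter_upwards with q; positivity)
    have hu_int : Integrable u volume := huc.integrable_of_hasCompactSupport hcu
    have h1 : eLpNorm u 1 volume = ENNReal.ofReal (∫ q : Pt N, |u q|) := by
      rw [eLpNorm_one_eq_lintegral_enorm,
        ofReal_integral_eq_lintegral_ofReal hu_int.abs
          (by filter_upwards with q; positivity)]
      exact lintegral_congr fun q => Real.enorm_eq_ofReal_abs (u q)
    have h2 : eLpNorm w 1 volume = ENNReal.ofReal (∫ q : Pt N, |w q|) := by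
      rw [eLpNorm_one_eq_lintegral_enorm,
        ofReal_integral_eq_lintegral_ofReal hwint.abs
          (by filter_upwards with q; positivity)]
      exact lintegral_congr fun q => Real.enorm_eq_ofReal_abs (w q)
    have hAabs : A = ∫ q : Pt N, |u q| := by
      rw [hAdef]
      exact integral_congr_ae (by filter_upwards with q; rw [Real.rpow_one])
    rw [hp'1, h1, h2, ← ENNReal.ofReal_mul hlam.le]
    apply ENNReal.ofReal_le_ofReal
    calc lam * ∫ q : Pt N, |u q| = lam * A := by rw [hAabs]
      _ ≤ ∫ q in K, |w q| := hlimle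
      _ ≤ ∫ q : Pt N, |w q| := hKle
  · -- case 1 < p
    set I : ℝ := ∫ q : Pt N, |w q| * |u q| ^ (p - 1) with hIdef
    have hucont : Continuous (fun q : Pt N => |u q| ^ (p - 1)) :=
      huc.abs.rpow_const fun _ => Or.inr (by linarith)
    have T3 : Tendsto (fun n => ∫ q : Pt N, |w q * gee p (e n) (u q)|) atTop (𝓝 I) := by
      apply tendsto_integral_of_dominated_convergence
        (K.indicator fun q => B ^ ((p-1)/2) * |w q|)
      · intro n
        have hgasm : AEStronglyMeasurable (fun q : Pt N => w q * gee p (e n) (u q))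
            volume := hwm.mul
          (((continuous_gee (he n)).comp huc : Continuous fun q : Pt N =>
            gee p (e n) (u q))).aestronglyMeasurable
        exact hgasm.norm.congr (by filter_upwards with q; rw [Real.norm_eq_abs])
      · rw [integrable_indicator_iff hKm]
        exact hwK.abs.const_mul _
      · intro n
        filter_upwards with q
        by_cases hq : q ∈ K
        · rw [Set.indicator_of_mem hq, Real.norm_eq_abs, abs_abs, abs_mul]
          have hg1 := abs_gee_le (t := u q) hp1 (he n) (hBb (he n) (he1 n) q)
          calc |w q| * |gee p (e n) (u q)| ≤ |w q| * (B ^ ((p-1)/2)) :=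
                mul_le_mul_of_nonneg_left hg1 (abs_nonneg _)
            _ = B ^ ((p-1)/2) * |w q| := mul_comm _ _
        · rw [Set.indicator_of_notMem hq, huK q hq, gee_zero (he n)]
          simp
      · filter_upwards with q
        have := (tendsto_abs_gee he hlime hpl (u q)).const_mul |w q|
        apply this.congr
        intro n
        rw [abs_mul]
    -- pass to the limit in the key inequality
    have hlamA : lam * A ≤ I := by
      have hlim1 : Tendsto (fun n => lam * (∫ q : Pt N, u q * gee p (e n) (u q))
          + (∫ q : Pt N, divXs F q *
            (Gee p (e n) (u q) - (1/p) * (u q * gee p (e n) (u q)))))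
          atTop (𝓝 (lam * A + 0)) := (T1.const_mul lam).add T2
      rw [← add_zero (lam * A)]
      exact le_of_tendsto_of_tendsto' hlim1 T3 (fun n => key (e n) (he n) (he1 n))
    have hIint : Integrable (fun q : Pt N => |w q| * |u q| ^ (p - 1)) volume := by
      apply Integrable.mono' (g := fun q : Pt N =>
        K.indicator (fun q => B ^ ((p-1)/2) * |w q|) q)
      · rw [integrable_indicator_iff hKm]
        exact hwK.abs.const_mul _
      · have hasm : AEStronglyMeasurable (fun q : Pt N => ‖w q‖ * |u q| ^ (p - 1))
            volume := hwm.norm.mul hucont.aestronglyMeasurable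
        exact hasm.congr (by filter_upwards with q; rw [Real.norm_eq_abs])
      · filter_upwards with q
        by_cases hq : q ∈ K
        · rw [Set.indicator_of_mem hq, Real.norm_eq_abs, abs_mul, abs_abs,
            abs_of_nonneg (Real.rpow_nonneg (abs_nonneg _) _)]
          have h5 : |u q| ^ (p - 1) ≤ B ^ ((p-1)/2) := by
            rw [← rpow_sq_abs (u q) (p-1)]
            exact Real.rpow_le_rpow (sq_nonneg _) (le_trans (husq q) (by simp [hBdef]))
              (by linarith : (0:ℝ) ≤ (p-1)/2)
          calc |w q| * |u q| ^ (p - 1) ≤ |w q| * (B ^ ((p-1)/2)) :=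
                mul_le_mul_of_nonneg_left h5 (abs_nonneg _)
            _ = B ^ ((p-1)/2) * |w q| := mul_comm _ _
        · rw [Set.indicator_of_notMem hq, huK q hq]
          simp [Real.zero_rpow (by linarith : p - 1 ≠ 0)]
    -- ENNReal bookkeeping
    have hp'0 : p' ≠ 0 := (ENNReal.ofReal_pos.2 hp0).ne'
    have hp't : p' ≠ ⊤ := by rw [hp'def]; exact ENNReal.ofReal_ne_top
    have hBA : ∫⁻ q : Pt N, ‖u q‖ₑ ^ p = ENNReal.ofReal A := by
      rw [show (fun q : Pt N => ‖u q‖ₑ ^ p)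
            = fun q : Pt N => ENNReal.ofReal (|u q| ^ p) from funext fun q => by
          rw [Real.enorm_eq_ofReal_abs,
            ENNReal.ofReal_rpow_of_nonneg (abs_nonneg _) hp0.le]]
      exact (ofReal_integral_eq_lintegral_ofReal hAint
        (by filter_upwards with q; positivity)).symm
    have heLu : eLpNorm u p' volume = (ENNReal.ofReal A) ^ (1/p) := by
      rw [eLpNorm_eq_lintegral_rpow_enorm_toReal hp'0 hp't, hp'def,
        ENNReal.toReal_ofReal hp0.le, hBA]
    have heLw : eLpNorm w p' volume
        = (∫⁻ q : Pt N, ‖w q‖ₑ ^ p) ^ (1/p) := by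
      rw [eLpNorm_eq_lintegral_rpow_enorm_toReal hp'0 hp't, hp'def,
        ENNReal.toReal_ofReal hp0.le]
    by_cases hA0' : A = 0
    · rw [heLu, hA0', ENNReal.ofReal_zero,
        ENNReal.zero_rpow_of_pos (by positivity : (0:ℝ) < 1/p)]
      simp
    have hApos : 0 < A := lt_of_le_of_ne hA0 (Ne.symm hA0')
    have hpq : p.HolderConjugate p.conjExponent := Real.HolderConjugate.conjExponent hpl
    set q0 : ℝ := p.conjExponent with hq0def
    have hq0pos : 0 < q0 := hpq.symm.pos
    have hpq0 : (p - 1) * q0 = p := by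
      rw [hq0def, Real.conjExponent]
      have h1 : p - 1 ≠ 0 := by linarith
      field_simp
    have hfmeas : AEMeasurable (fun q : Pt N => ‖w q‖ₑ) volume := hwm.enorm
    have hgmeas : AEMeasurable (fun q : Pt N => ENNReal.ofReal (|u q| ^ (p-1))) volume :=
      ENNReal.measurable_ofReal.comp_aemeasurable
        (hucont.measurable.aemeasurable)
    have hHold := ENNReal.lintegral_mul_le_Lp_mul_Lq volume hpq hfmeas hgmeas
    have hofI : ENNReal.ofReal I
        = ∫⁻ q : Pt N, ‖w q‖ₑ * ENNReal.ofReal (|u q| ^ (p-1)) := by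
      rw [ofReal_integral_eq_lintegral_ofReal hIint (by
        filter_upwards with q
        positivity)]
      exact lintegral_congr fun q => by
        rw [ENNReal.ofReal_mul (abs_nonneg _), Real.enorm_eq_ofReal_abs]
    have hsecond : ∫⁻ q : Pt N, (ENNReal.ofReal (|u q| ^ (p-1))) ^ q0
        = ENNReal.ofReal A := by
      rw [show (fun q : Pt N => (ENNReal.ofReal (|u q| ^ (p-1))) ^ q0)
            = fun q : Pt N => ENNReal.ofReal (|u q| ^ p) from funext fun q => by
          rw [ENNReal.ofReal_rpow_of_nonneg (Real.rpow_nonneg (abs_nonneg _) _) hq0pos.le,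
            ← Real.rpow_mul (abs_nonneg _), hpq0]]
      exact (ofReal_integral_eq_lintegral_ofReal hAint
        (by filter_upwards with q; positivity)).symm
    have main : ENNReal.ofReal lam * ENNReal.ofReal A
        ≤ eLpNorm w p' volume * (ENNReal.ofReal A) ^ (1/q0) := by
      calc ENNReal.ofReal lam * ENNReal.ofReal A = ENNReal.ofReal (lam * A) :=
            (ENNReal.ofReal_mul hlam.le).symm
        _ ≤ ENNReal.ofReal I := ENNReal.ofReal_le_ofReal hlamA
        _ = ∫⁻ q : Pt N, ‖w q‖ₑ * ENNReal.ofReal (|u q| ^ (p-1)) := hofI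
        _ ≤ (∫⁻ q : Pt N, ‖w q‖ₑ ^ p) ^ (1/p)
            * (∫⁻ q : Pt N, (ENNReal.ofReal (|u q| ^ (p-1))) ^ q0) ^ (1/q0) := by
            simpa [Pi.mul_apply] using hHold
        _ = eLpNorm w p' volume * (ENNReal.ofReal A) ^ (1/q0) := by
            rw [heLw, hsecond]
    have h𝔄0 : ENNReal.ofReal A ≠ 0 := (ENNReal.ofReal_pos.2 hApos).ne'
    have h𝔄t : ENNReal.ofReal A ≠ ⊤ := ENNReal.ofReal_ne_top
    have hsplitA : ENNReal.ofReal A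
        = (ENNReal.ofReal A) ^ (1/p) * (ENNReal.ofReal A) ^ (1/q0) := by
      rw [← ENNReal.rpow_add _ _ h𝔄0 h𝔄t]
      rw [show 1/p + 1/q0 = 1 by
        have := hpq.inv_add_inv_eq_one
        rw [one_div, one_div, ← hq0def] at *
        linarith]
      exact (ENNReal.rpow_one _).symm
    have main2 : (ENNReal.ofReal lam * (ENNReal.ofReal A) ^ (1/p))
        * (ENNReal.ofReal A) ^ (1/q0)
        ≤ eLpNorm w p' volume * (ENNReal.ofReal A) ^ (1/q0) := by
      calc (ENNReal.ofReal lam * (ENNReal.ofReal A) ^ (1/p))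
            * (ENNReal.ofReal A) ^ (1/q0)
          = ENNReal.ofReal lam * ENNReal.ofReal A := by rw [mul_assoc, ← hsplitA]
        _ ≤ eLpNorm w p' volume * (ENNReal.ofReal A) ^ (1/q0) := main
    have hc0 : (ENNReal.ofReal A) ^ (1/q0) ≠ 0 :=
      (ENNReal.rpow_pos (ENNReal.ofReal_pos.2 hApos) h𝔄t).ne'
    have hct : (ENNReal.ofReal A) ^ (1/q0) ≠ ⊤ :=
      ENNReal.rpow_ne_top_of_nonneg (by positivity) h𝔄t
    rw [heLu]
    exact (ENNReal.mul_le_mul_iff_left hc0 hct).1 main2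
end
end

section
/- Let W ∈ C^1(ℝ^{1+N}) satisfy W > 0, |D_s W| ≤ β W² and |∇_x W| ≤ γ W^{3/2} on ℝ^{1+N} for constants β, γ > 0. Fix (s₀, x₀) ∈ ℝ^{1+N} and real numbers ℓ₁, ℓ₂ ≥ 1, and set τ = (4 β ℓ₁ W(s₀,x₀))^{-1} and r = √3 (2 ℓ₂ γ W(s₀,x₀)^{1/2})^{-1}. Then for all (s,x) with |s − s₀| < τ and |x − x₀| < r: ((2ℓ₂ − 1)√3 / (4ℓ₂)) W(s,x)^{1/2} ≤ W(s₀,x₀)^{1/2} ≤ ((2ℓ₂ + 1)√5 / (4ℓ₂)) W(s,x)^{1/2}. -/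
/-!
Along time lines `W⁻¹` is `β`-Lipschitz, since its `s`-derivative is `-D_s W / W²`; along
spatial segments `W^{-1/2}` is `γ/2`-Lipschitz, since its gradient is `-∇_x W / (2 W^{3/2})`.
Over the time span `τ` the quantity `W⁻¹` moves by at most `W(s₀,x₀)⁻¹ / (4ℓ₁)`, so
`W(s,x₀)^{-1/2}` lies between `√3/2` and `√5/2` times `W(s₀,x₀)^{-1/2}`; over the radius `r`
the quantity `W^{-1/2}` moves by at most `√3/(4ℓ₂) · W(s₀,x₀)^{-1/2}`. Combining the two
(with `√3 ≤ √5` on the upper side) gives both bounds.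
-/

noncomputable section
open MeasureTheory Real Set Filter ENNReal NNReal Matrix

lemma abs_fderiv_apply_zero_prod_le {N : ℕ} (u : Pt N → ℝ) (q : Pt N) (d : Fin N → ℝ) :
    |fderiv ℝ u q (0, d)| ≤ enorm2 (gradX u q) * enorm2 d := by
  have hd : ((0 : ℝ), d) = ∑ j, d j • ((0 : ℝ), (Pi.single j 1 : Fin N → ℝ)) := by
    ext j
    · simp [Prod.fst_sum]
    · simp [Prod.snd_sum, Finset.sum_apply, Pi.single_apply]
  have hsum : fderiv ℝ u q (0, d) = ∑ j, pX j u q * d j := by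
    simp only [hd, map_sum, map_smul, smul_eq_mul, pX, mul_comm]
  rw [hsum, enorm2, enorm2, ← Real.sqrt_mul (Finset.sum_nonneg fun j _ => sq_nonneg _)]
  exact Real.abs_le_sqrt (Finset.sum_mul_sq_le_sq_mul_sq _ _ _)

lemma abs_sub_le_mul_of_hasDerivAt {f f' : ℝ → ℝ} {C : ℝ} (hf : ∀ t, HasDerivAt f (f' t) t)
    (hC : ∀ t, |f' t| ≤ C) (a b : ℝ) : |f b - f a| ≤ C * |b - a| :=
  convex_univ.norm_image_sub_le_of_norm_hasDerivWithin_le (fun t _ => (hf t).hasDerivWithinAt)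
    (fun t _ => hC t) (mem_univ a) (mem_univ b)

lemma abs_inv_sub_inv_le_of_abs_deriv_le {f f' : ℝ → ℝ} {β : ℝ}
    (hf : ∀ t, HasDerivAt f (f' t) t) (hpos : ∀ t, 0 < f t) (hβ : ∀ t, |f' t| ≤ β * f t ^ 2)
    (a b : ℝ) : |(f b)⁻¹ - (f a)⁻¹| ≤ β * |b - a| := by
  refine abs_sub_le_mul_of_hasDerivAt (fun t => (hf t).inv (hpos t).ne') (fun t => ?_) a b
  rw [abs_div, abs_neg, abs_of_pos (pow_pos (hpos t) 2), div_le_iff₀ (pow_pos (hpos t) 2)]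
  exact hβ t

lemma abs_inv_sqrt_sub_inv_sqrt_le_of_abs_deriv_le {f f' : ℝ → ℝ} {γ : ℝ}
    (hf : ∀ t, HasDerivAt f (f' t) t) (hpos : ∀ t, 0 < f t)
    (hγ : ∀ t, |f' t| ≤ γ * f t ^ ((3 : ℝ) / 2)) (a b : ℝ) :
    |(√(f b))⁻¹ - (√(f a))⁻¹| ≤ γ / 2 * |b - a| := by
  refine abs_sub_le_mul_of_hasDerivAt
    (fun t => (((hf t).sqrt (hpos t).ne').inv (Real.sqrt_pos.2 (hpos t)).ne')) (fun t => ?_) a b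
  have hsqrt : 0 < √(f t) := Real.sqrt_pos.2 (hpos t)
  have h32 : f t ^ ((3 : ℝ) / 2) = f t * √(f t) := by
    rw [show (3 : ℝ) / 2 = 1 + 1 / 2 by norm_num, Real.rpow_add (hpos t), Real.rpow_one,
      ← Real.sqrt_eq_rpow]
  rw [abs_div, abs_neg, abs_div, abs_of_pos (pow_pos hsqrt 2), abs_of_pos (mul_pos two_pos hsqrt),
    Real.sq_sqrt (hpos t).le, div_div, div_le_iff₀ (mul_pos (mul_pos two_pos hsqrt) (hpos t))]
  calc |f' t| ≤ γ * (f t * √(f t)) := h32 ▸ hγ t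
    _ = γ / 2 * (2 * √(f t) * f t) := by ring

lemma hasDerivAt_pT {N : ℕ} {u : Pt N → ℝ} (hu : Differentiable ℝ u) (x : Fin N → ℝ) (t : ℝ) :
    HasDerivAt (fun s => u (s, x)) (pT u (t, x)) t :=
  (hu (t, x)).hasFDerivAt.comp_hasDerivAt t ((hasDerivAt_id t).prodMk (hasDerivAt_const t x))

lemma hasDerivAt_comp_segment {N : ℕ} {u : Pt N → ℝ} (hu : Differentiable ℝ u) (s : ℝ)
    (x d : Fin N → ℝ) (t : ℝ) :
    HasDerivAt (fun t => u (s, x + t • d)) (fderiv ℝ u (s, x + t • d) (0, d)) t := by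
  have hline : HasDerivAt (fun t : ℝ => x + t • d) d t := by
    simpa using ((hasDerivAt_id t).smul_const d).const_add x
  exact (hu _).hasFDerivAt.comp_hasDerivAt t ((hasDerivAt_const t s).prodMk hline)

lemma abs_inv_sub_inv_le_of_abs_pT_le {N : ℕ} {W : Pt N → ℝ} {β : ℝ} (hW : Differentiable ℝ W)
    (hpos : ∀ q, 0 < W q) (hWt : ∀ q, |pT W q| ≤ β * W q ^ 2) (x : Fin N → ℝ) (s₁ s₂ : ℝ) :
    |(W (s₂, x))⁻¹ - (W (s₁, x))⁻¹| ≤ β * |s₂ - s₁| :=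
  abs_inv_sub_inv_le_of_abs_deriv_le (hasDerivAt_pT hW x) (fun _ => hpos _) (fun _ => hWt _) s₁ s₂

lemma abs_inv_sqrt_sub_inv_sqrt_le_of_enorm2_gradX_le {N : ℕ} {W : Pt N → ℝ} {γ : ℝ}
    (hW : Differentiable ℝ W) (hpos : ∀ q, 0 < W q)
    (hWx : ∀ q, enorm2 (gradX W q) ≤ γ * W q ^ ((3 : ℝ) / 2)) (s : ℝ) (x₁ x₂ : Fin N → ℝ) :
    |(√(W (s, x₂)))⁻¹ - (√(W (s, x₁)))⁻¹| ≤ γ / 2 * enorm2 (x₂ - x₁) := by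
  have hbound : ∀ t : ℝ, |fderiv ℝ W (s, x₁ + t • (x₂ - x₁)) (0, x₂ - x₁)| ≤
      γ * enorm2 (x₂ - x₁) * W (s, x₁ + t • (x₂ - x₁)) ^ ((3 : ℝ) / 2) := fun t =>
    calc _ ≤ enorm2 (gradX W _) * enorm2 (x₂ - x₁) := abs_fderiv_apply_zero_prod_le W _ _
      _ ≤ γ * W _ ^ ((3 : ℝ) / 2) * enorm2 (x₂ - x₁) := by
          gcongr
          · exact Real.sqrt_nonneg _
          · exact hWx _
      _ = _ := by ring
  convert abs_inv_sqrt_sub_inv_sqrt_le_of_abs_deriv_le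
    (hasDerivAt_comp_segment hW s x₁ (x₂ - x₁)) (fun _ => hpos _) hbound 0 1 using 1
  · simp only [one_smul, add_sub_cancel, zero_smul, add_zero]
  · simp only [sub_zero, abs_one, mul_one]; ring

lemma inv_sqrt_mem_Icc_of_abs_inv_sub_le {x y : ℝ} (h : |y⁻¹ - x⁻¹| ≤ x⁻¹ / 4) :
    (√y)⁻¹ ∈ Icc (√3 / 2 * (√x)⁻¹) (√5 / 2 * (√x)⁻¹) := by
  have hsqrt (c : ℝ) (hc : 0 ≤ c) : √(c / 4 * x⁻¹) = √c / 2 * (√x)⁻¹ := by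
    rw [Real.sqrt_mul (by positivity), Real.sqrt_div hc, Real.sqrt_inv,
      show (4 : ℝ) = 2 ^ 2 by norm_num, Real.sqrt_sq zero_le_two]
  obtain ⟨hlo, hhi⟩ := abs_le.1 h
  rw [← hsqrt 3 (by norm_num), ← hsqrt 5 (by norm_num), ← Real.sqrt_inv]
  constructor <;> apply Real.sqrt_le_sqrt <;> linarith

lemma mem_Icc_of_abs_sub_le_of_mem_Icc {p q v ℓ : ℝ} (hp : 0 ≤ p) (hℓ : 0 < ℓ)
    (hq : q ∈ Icc (√3 / 2 * p) (√5 / 2 * p)) (hv : |v - q| ≤ √3 / (4 * ℓ) * p) :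
    v ∈ Icc ((2 * ℓ - 1) * √3 / (4 * ℓ) * p) ((2 * ℓ + 1) * √5 / (4 * ℓ) * p) := by
  obtain ⟨hvlo, hvhi⟩ := abs_le.1 hv
  have h35 : √3 / (4 * ℓ) * p ≤ √5 / (4 * ℓ) * p := by
    gcongr
    norm_num
  have hlo : (2 * ℓ - 1) * √3 / (4 * ℓ) * p = √3 / 2 * p - √3 / (4 * ℓ) * p := by
    field_simp; ring
  have hhi : (2 * ℓ + 1) * √5 / (4 * ℓ) * p = √5 / 2 * p + √5 / (4 * ℓ) * p := by
    field_simp; ring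
  exact ⟨by linarith [hq.1], by linarith [hq.2]⟩

lemma mul_le_iff_mul_inv_le_inv {k a c : ℝ} (ha : 0 < a) (hc : 0 < c) :
    k * c ≤ a ↔ k * a⁻¹ ≤ c⁻¹ := by
  rw [← div_eq_mul_inv, div_le_iff₀ ha, ← div_eq_inv_mul, le_div_iff₀ hc]

lemma le_mul_iff_inv_le_mul_inv {k a c : ℝ} (ha : 0 < a) (hc : 0 < c) :
    a ≤ k * c ↔ c⁻¹ ≤ k * a⁻¹ := by
  rw [← div_eq_mul_inv, le_div_iff₀ ha, ← div_eq_inv_mul, div_le_iff₀ hc]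

theorem statement9_general (N : ℕ)
    (W : Pt N → ℝ) (hWreg : ContDiff ℝ 1 W)
    (hWpos : ∀ q, 0 < W q)
    (β γ : ℝ) (hβ : 0 < β) (hγ : 0 < γ)
    (hWt : ∀ q, |pT W q| ≤ β * W q ^ 2)
    (hWx : ∀ q, enorm2 (gradX W q) ≤ γ * W q ^ ((3 : ℝ) / 2))
    (s₀ : ℝ) (x₀ : Fin N → ℝ) (ℓ₁ ℓ₂ : ℝ) (hℓ₁ : 1 ≤ ℓ₁) (hℓ₂ : 1 ≤ ℓ₂)
    (τ r : ℝ)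
    (hτ : τ = (4 * β * ℓ₁ * W (s₀, x₀))⁻¹)
    (hr : r = Real.sqrt 3 * (2 * ℓ₂ * γ * Real.sqrt (W (s₀, x₀)))⁻¹) :
    ∀ (s : ℝ) (x : Fin N → ℝ), |s - s₀| < τ → enorm2 (x - x₀) < r →
      ((2 * ℓ₂ - 1) * Real.sqrt 3 / (4 * ℓ₂)) * Real.sqrt (W (s, x)) ≤
          Real.sqrt (W (s₀, x₀)) ∧
        Real.sqrt (W (s₀, x₀)) ≤
          ((2 * ℓ₂ + 1) * Real.sqrt 5 / (4 * ℓ₂)) * Real.sqrt (W (s, x)) := by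
  intro s x hs hx
  have hW : Differentiable ℝ W := hWreg.differentiable one_ne_zero
  have hW₀ := hWpos (s₀, x₀)
  have hℓ₂pos : 0 < ℓ₂ := by linarith
  have htime : |(W (s, x₀))⁻¹ - (W (s₀, x₀))⁻¹| ≤ (W (s₀, x₀))⁻¹ / 4 :=
    calc _ ≤ β * |s - s₀| := abs_inv_sub_inv_le_of_abs_pT_le hW hWpos hWt x₀ s₀ s
      _ ≤ β * τ := by gcongr
      _ = (W (s₀, x₀))⁻¹ / (4 * ℓ₁) := by rw [hτ]; field_simp
      _ ≤ (W (s₀, x₀))⁻¹ / 4 := by gcongr; linarith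
  have hspace : |(√(W (s, x)))⁻¹ - (√(W (s, x₀)))⁻¹| ≤ √3 / (4 * ℓ₂) * (√(W (s₀, x₀)))⁻¹ :=
    calc _ ≤ γ / 2 * enorm2 (x - x₀) :=
          abs_inv_sqrt_sub_inv_sqrt_le_of_enorm2_gradX_le hW hWpos hWx s x₀ x
      _ ≤ γ / 2 * r := by gcongr
      _ = _ := by rw [hr]; field_simp; ring
  obtain ⟨hlo, hhi⟩ := mem_Icc_of_abs_sub_le_of_mem_Icc (by positivity) hℓ₂pos
    (inv_sqrt_mem_Icc_of_abs_inv_sub_le htime) hspace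
  have ha := Real.sqrt_pos.2 hW₀
  have hc := Real.sqrt_pos.2 (hWpos (s, x))
  exact ⟨(mul_le_iff_mul_inv_le_inv ha hc).2 hlo, (le_mul_iff_inv_le_mul_inv ha hc).2 hhi⟩

/-- oscillation estimate for the weight `W` on a parabolic cylinder:
if `|D_s W| ≤ βW²` and `|∇_x W| ≤ γW^{3/2}` then, with
`τ = (4βℓ₁W(s₀,x₀))⁻¹` and `r = √3 (2ℓ₂γ W(s₀,x₀)^{1/2})⁻¹`,
`((2ℓ₂−1)√3/(4ℓ₂)) W(s,x)^{1/2} ≤ W(s₀,x₀)^{1/2} ≤ ((2ℓ₂+1)√5/(4ℓ₂)) W(s,x)^{1/2}`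
on the cylinder `{|s−s₀| < τ, |x−x₀| < r}`. -/
theorem statement9 (N : ℕ) (hN : 1 ≤ N)
    (W : Pt N → ℝ) (hWreg : ContDiff ℝ 1 W)
    (hWpos : ∀ q, 0 < W q)
    (β γ : ℝ) (hβ : 0 < β) (hγ : 0 < γ)
    (hWt : ∀ q, |pT W q| ≤ β * W q ^ 2)
    (hWx : ∀ q, enorm2 (gradX W q) ≤ γ * W q ^ ((3 : ℝ) / 2))
    (s₀ : ℝ) (x₀ : Fin N → ℝ) (ℓ₁ ℓ₂ : ℝ) (hℓ₁ : 1 ≤ ℓ₁) (hℓ₂ : 1 ≤ ℓ₂)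
    (τ r : ℝ)
    (hτ : τ = (4 * β * ℓ₁ * W (s₀, x₀))⁻¹)
    (hr : r = Real.sqrt 3 * (2 * ℓ₂ * γ * Real.sqrt (W (s₀, x₀)))⁻¹) :
    ∀ (s : ℝ) (x : Fin N → ℝ), |s - s₀| < τ → enorm2 (x - x₀) < r →
      ((2 * ℓ₂ - 1) * Real.sqrt 3 / (4 * ℓ₂)) * Real.sqrt (W (s, x)) ≤
          Real.sqrt (W (s₀, x₀)) ∧
        Real.sqrt (W (s₀, x₀)) ≤
          ((2 * ℓ₂ + 1) * Real.sqrt 5 / (4 * ℓ₂)) * Real.sqrt (W (s, x)) :=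
  statement9_general N W hWreg hWpos β γ hβ hγ hWt hWx s₀ x₀ ℓ₁ ℓ₂ hℓ₁ hℓ₂ τ r hτ hr
end
end
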